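/- arXiv:1311.3679 — 10 statements merged into one kernel-verified Lean document; each statement's English description precedes it below -/
import Mathlib

section
/- A second countable normal Hausdorff space embeds into the Banach space l¹(ℕ). -/
noncomputable section
open Set Topology TopologicalSpace

/-- `𝒰` is an open cover of `X`. -/
def IsOpenCover {X : Type} [TopologicalSpace X] (𝒰 : Set (Set X)) : Prop :=
  (∀ U ∈ 𝒰, IsOpen U) ∧ ⋃₀ 𝒰 = univ

/-- Star of a point with respect to a family of sets. -/
def ptStar {X : Type} (x : X) (𝒰 : Set (Set X)) : Set X := ⋃₀ {U | U ∈ 𝒰 ∧ x ∈ U}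

/-- Star of a set with respect to a family of sets. -/
def setStar {X : Type} (A : Set X) (𝒰 : Set (Set X)) : Set X :=
  ⋃₀ {U | U ∈ 𝒰 ∧ (U ∩ A).Nonempty}

/-- `𝒱` star-refines `𝒰`. -/
def StarRefines {X : Type} (𝒱 𝒰 : Set (Set X)) : Prop :=
  ∀ x : X, ∃ U ∈ 𝒰, ptStar x 𝒱 ⊆ U

/-- A continuous partition of unity viewed as a map into `l¹(S)` with image in `Δ(S)`. -/
def IsPU {X S : Type} [TopologicalSpace X] (f : X → lp (fun _ : S => ℝ) 1) : Prop :=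
  Continuous f ∧ ∀ x : X, (∀ s : S, 0 ≤ f x s) ∧ HasSum (fun s => f x s) 1

/-- The partition of unity `f` is `𝒰`-small: each carrier lies in a member of `𝒰`. -/
def IsUSmall {X S : Type} [TopologicalSpace X] (𝒰 : Set (Set X))
    (f : X → lp (fun _ : S => ℝ) 1) : Prop :=
  ∀ s : S, ∃ U ∈ 𝒰, {x : X | f x s ≠ 0} ⊆ U

/-- There exists a `𝒰`-small partition of unity on `X`. -/
def ExistsUSmallPU {X : Type} [TopologicalSpace X] (𝒰 : Set (Set X)) : Prop :=
  ∃ (S : Type) (f : X → lp (fun _ : S => ℝ) 1), IsPU f ∧ IsUSmall 𝒰 f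

/-- An indexed family of sets is discrete. -/
def DiscreteFam {X S : Type} [TopologicalSpace X] (A : S → Set X) : Prop :=
  ∀ x : X, ∃ N ∈ nhds x, {s : S | (A s ∩ N).Nonempty}.Subsingleton

/-- A family of sets (as a set of sets) is discrete. -/
def DiscreteSetFam {X : Type} [TopologicalSpace X] (𝒜 : Set (Set X)) : Prop :=
  ∀ x : X, ∃ N ∈ nhds x, {A | A ∈ 𝒜 ∧ (A ∩ N).Nonempty}.Subsingleton

/-- `𝒰` has a σ-discrete closed refinement. -/
def HasSigmaDiscreteClosedRefinement {X : Type} [TopologicalSpace X]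
    (𝒰 : Set (Set X)) : Prop :=
  ∃ D : ℕ → Set (Set X), (∀ n, DiscreteSetFam (D n)) ∧
    (∀ n, ∀ F ∈ D n, IsClosed F) ∧
    (∀ n, ∀ F ∈ D n, ∃ U ∈ 𝒰, F ⊆ U) ∧
    ⋃₀ (⋃ n, D n) = univ

/-- `X` is collectionwise normal. -/
def CwNormal (X : Type) [TopologicalSpace X] : Prop :=
  ∀ (S : Type) (A : S → Set X), (∀ s, IsClosed (A s)) → DiscreteFam A →
    ∃ V : S → Set X, (∀ s, IsOpen (V s)) ∧ (∀ s, A s ⊆ V s) ∧ DiscreteFam V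

/-!
Being regular and second countable, `X` is metrizable and separable, so it embeds into the
Hilbert cube `ℕ → [0, 1]`. The cube embeds into `l¹(ℕ)` by `u ↦ (2⁻ⁿ uₙ)ₙ`: this map is
continuous because its coordinates are continuous and dominated by a summable sequence, and it
is injective, so it is a closed embedding since the cube is compact.
-/

open unitInterval

section WeightedCube

variable {ι : Type*}

theorem lp.continuous_of_forall_norm_apply_le {E : ι → Type*} [∀ i, NormedAddCommGroup (E i)]
    [∀ i, CompleteSpace (E i)] {X : Type*} [TopologicalSpace X] {F : X → lp E 1} {c : ι → ℝ}
    (hc : Summable c) (hF : ∀ i, Continuous fun x => F x i) (hFc : ∀ i x, ‖F x i‖ ≤ c i) :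
    Continuous F := by
  classical
  have hF_tsum : (fun x => ∑' i, lp.single 1 i (F x i)) = F :=
    funext fun x => (lp.hasSum_single ENNReal.one_ne_top (F x)).tsum_eq
  rw [← hF_tsum]
  refine continuous_tsum (fun i => (lp.isometry_single i).continuous.comp (hF i)) hc fun i x => ?_
  rw [lp.norm_single one_pos]
  exact hFc i x

theorem norm_mul_unitInterval_le (c : ℝ) (t : I) : ‖c * t‖ ≤ |c| := by
  rw [Real.norm_eq_abs, abs_mul, abs_of_nonneg t.2.1]
  exact mul_le_of_le_one_right (abs_nonneg c) t.2.2

def weightedCubeToL1 {c : ι → ℝ} (hc : Summable c) (u : ι → I) : lp (fun _ : ι => ℝ) 1 :=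
  ⟨fun i => c i * u i, memℓp_gen <| hc.abs.of_nonneg_of_le (fun _ => by positivity) fun i => by
    simpa using norm_mul_unitInterval_le (c i) (u i)⟩

theorem isClosedEmbedding_weightedCubeToL1 {c : ι → ℝ} (hc : Summable c) (hc0 : ∀ i, c i ≠ 0) :
    IsClosedEmbedding (weightedCubeToL1 hc) := by
  refine Continuous.isClosedEmbedding ?_ fun u v huv => funext fun i => Subtype.ext ?_
  · exact lp.continuous_of_forall_norm_apply_le hc.abs
      (fun i => continuous_const.mul (continuous_subtype_val.comp (continuous_apply i)))
      fun i u => norm_mul_unitInterval_le (c i) (u i)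
  · exact mul_left_cancel₀ (hc0 i) (congrFun (congrArg Subtype.val huv) i)

end WeightedCube

/-- A second countable normal Hausdorff space embeds into `l¹(ℕ)`. -/
theorem stmt0 (X : Type) [TopologicalSpace X] [SecondCountableTopology X]
    [NormalSpace X] [T2Space X] :
    ∃ f : X → lp (fun _ : ℕ => ℝ) 1, IsEmbedding f := by
  let := metrizableSpaceMetric X
  obtain ⟨F, hF⟩ := Metric.PiNatEmbed.exists_embedding_to_hilbert_cube (X := X)
  exact ⟨_, (isClosedEmbedding_weightedCubeToL1 summable_geometric_two
    fun n => by positivity).isEmbedding.comp hF⟩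
end
end

section
/- A topological space X is metrizable if and only if there exists an index set S and a continuous partition of unity f : X → l¹(S) such that the family of point-inverses of stars of vertices {f⁻¹(st(s)) : s ∈ S} forms a basis for the topology of X. -/
noncomputable section
open Set Topology TopologicalSpace Metric ENNReal NNReal

/-- Coordinate evaluation on `lp _ 1` is continuous. -/
lemma lp_eval_continuous {S : Type} (s : S) :
    Continuous fun g : lp (fun _ : S => ℝ) 1 => g s := by
  have : LipschitzWith 1 fun g : lp (fun _ : S => ℝ) 1 => g s := by
    apply LipschitzWith.of_dist_le_mul
    intro f g
    rw [NNReal.coe_one, one_mul, dist_eq_norm, dist_eq_norm]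
    have := lp.norm_apply_le_norm (one_ne_zero) (f - g) s
    simpa [lp.coeFn_sub] using this
  exact this.continuous

/-- A coordinatewise nonnegative continuous family summing to 1 gives a continuous map to l¹. -/
lemma exists_continuous_lp {X S : Type} [TopologicalSpace X] (g : S → X → ℝ)
    (hc : ∀ s, Continuous (g s)) (hnn : ∀ s x, 0 ≤ g s x)
    (hsum : ∀ x, HasSum (fun s => g s x) 1) :
    ∃ F : X → lp (fun _ : S => ℝ) 1, (∀ x, (F x : ∀ _ : S, ℝ) = fun s => g s x) ∧ Continuous F := by
  have hmem : ∀ x, Memℓp (fun s => g s x) 1 := by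
    intro x
    apply memℓp_gen
    have : (fun s => ‖g s x‖ ^ (1 : ℝ≥0∞).toReal) = fun s => g s x := by
      funext s
      simp [Real.norm_of_nonneg (hnn s x)]
    rw [this]
    exact (hsum x).summable
  refine ⟨fun x => ⟨fun s => g s x, hmem x⟩, fun x => rfl, ?_⟩
  rw [continuous_iff_continuousAt]
  intro x
  rw [ContinuousAt, Metric.tendsto_nhds]
  intro ε hε
  -- choose finite T capturing most of the mass at x
  obtain ⟨T, hT⟩ : ∃ T : Finset S, 1 - ε/8 < ∑ s ∈ T, g s x := by
    have := (hsum x).eventually (eventually_gt_nhds (by linarith : (1:ℝ) - ε/8 < 1))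
    exact this.exists
  -- eventually the finite sum of differences is small
  have hcontsum : Continuous fun y => ∑ s ∈ T, |g s y - g s x| :=
    continuous_finset_sum _ fun s _ => ((hc s).sub continuous_const).abs
  have hev : ∀ᶠ y in nhds x, (∑ s ∈ T, |g s y - g s x|) < ε/8 := by
    have h0 : (fun y => ∑ s ∈ T, |g s y - g s x|) x = 0 := by simp
    have := (hcontsum.tendsto x).eventually (eventually_lt_nhds (by rw [h0]; linarith : (fun y => ∑ s ∈ T, |g s y - g s x|) x < ε/8))
    exact this
  filter_upwards [hev] with y hy
  -- estimate the norm
  rw [dist_eq_norm]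
  set F : X → lp (fun _ : S => ℝ) 1 := fun x => ⟨fun s => g s x, hmem x⟩ with hF
  have hcoe : ∀ s, (↑(F y - F x) : ∀ _ : S, ℝ) s = g s y - g s x := by
    intro s
    rw [lp.coeFn_sub]
    rfl
  have hnorm : ‖F y - F x‖ = ∑' s, |g s y - g s x| := by
    rw [lp.norm_eq_tsum_rpow (by norm_num) (F y - F x)]
    have h9 : ∀ s, ‖(↑(F y - F x) : ∀ _ : S, ℝ) s‖ ^ (ENNReal.toReal 1) = |g s y - g s x| := by
      intro s
      rw [hcoe]
      simp [Real.norm_eq_abs]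
    rw [tsum_congr h9]
    simp
  rw [hnorm]
  have hsummd : Summable fun s => |g s y - g s x| := by
    have h1 : Summable fun s => g s y := (hsum y).summable
    have h2 : Summable fun s => g s x := (hsum x).summable
    have := (h1.sub h2).abs
    simpa using this
  have h1 : Summable fun s => g s y := (hsum y).summable
  have h2 : Summable fun s => g s x := (hsum x).summable
  have key : ∑' s, |g s y - g s x|
      = (∑ s ∈ T, |g s y - g s x|) + ∑' s : ↥((↑T : Set S)ᶜ), |g (s:S) y - g (s:S) x| :=
    (Summable.sum_add_tsum_compl hsummd).symm
  have htaily : ∑ s ∈ T, g s y + ∑' s : ↥((↑T : Set S)ᶜ), g (s:S) y = 1 := by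
    rw [Summable.sum_add_tsum_compl h1, (hsum y).tsum_eq]
  have htailx : ∑ s ∈ T, g s x + ∑' s : ↥((↑T : Set S)ᶜ), g (s:S) x = 1 := by
    rw [Summable.sum_add_tsum_compl h2, (hsum x).tsum_eq]
  have htail_le : ∑' s : ↥((↑T : Set S)ᶜ), |g (s:S) y - g (s:S) x|
      ≤ (∑' s : ↥((↑T : Set S)ᶜ), g (s:S) y) + ∑' s : ↥((↑T : Set S)ᶜ), g (s:S) x := by
    have step1 : ∑' s : ↥((↑T : Set S)ᶜ), |g (s:S) y - g (s:S) x|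
        ≤ ∑' s : ↥((↑T : Set S)ᶜ), (g (s:S) y + g (s:S) x) := by
      refine Summable.tsum_le_tsum (fun s => ?_) (hsummd.subtype _) ((h1.add h2).subtype _)
      rw [abs_sub_le_iff]
      have hy' := hnn (s:S) y
      have hx' := hnn (s:S) x
      constructor <;> linarith
    have step2 : ∑' s : ↥((↑T : Set S)ᶜ), (g (s:S) y + g (s:S) x)
        = (∑' s : ↥((↑T : Set S)ᶜ), g (s:S) y) + ∑' s : ↥((↑T : Set S)ᶜ), g (s:S) x :=
      Summable.tsum_add (h1.subtype _) (h2.subtype _)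
    linarith
  have hTsum_y : ∑ s ∈ T, g s x - ∑ s ∈ T, |g s y - g s x| ≤ ∑ s ∈ T, g s y := by
    rw [← Finset.sum_sub_distrib]
    refine Finset.sum_le_sum fun s _ => ?_
    have h3 := neg_abs_le (g s y - g s x)
    linarith
  have htaily' : ∑' s : ↥((↑T : Set S)ᶜ), g (s:S) y = 1 - ∑ s ∈ T, g s y := by linarith
  have htailx' : ∑' s : ↥((↑T : Set S)ᶜ), g (s:S) x = 1 - ∑ s ∈ T, g s x := by linarith
  rw [key]
  rw [htaily', htailx'] at htail_le
  linarith

section fwd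
variable (X : Type) [TopologicalSpace X] [MetrizableSpace X]

lemma exists_pu_coords :
    ∃ (S : Type) (g : S → X → ℝ), (∀ s, Continuous (g s)) ∧ (∀ s x, 0 ≤ g s x) ∧
      (∀ x, HasSum (fun s => g s x) 1) ∧
      (∀ s, IsOpen {x | g s x ≠ 0}) ∧
      (∀ (x : X) (u : Set X), x ∈ u → IsOpen u → ∃ s, g s x ≠ 0 ∧ {x | g s x ≠ 0} ⊆ u) := by
  letI : MetricSpace X := metrizableSpaceMetric X
  have hcov : ∀ n : ℕ, (univ : Set X) ⊆ ⋃ a : X, ball a ((1/2)^n) := fun n x _ =>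
    mem_iUnion.2 ⟨x, mem_ball_self (by positivity)⟩
  have hPU : ∀ n : ℕ, ∃ φ : PartitionOfUnity X X univ,
      φ.IsSubordinate fun a => ball a ((1/2)^n) := fun n =>
    PartitionOfUnity.exists_isSubordinate isClosed_univ _ (fun _ => isOpen_ball) (hcov n)
  choose φ hφ using hPU
  -- each level sums to 1 with finite support at each point
  have hlev : ∀ (n : ℕ) (x : X), HasSum (fun a => φ n a x) 1 := by
    intro n x
    have hfin : (Function.support fun a => φ n a x).Finite := (φ n).locallyFinite.point_finite x
    have h2 : HasSum (fun a => φ n a x) (∑ a ∈ hfin.toFinset, φ n a x) :=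
      hasSum_sum_of_ne_finset_zero fun b hb =>
        Classical.byContradiction fun h => hb (hfin.mem_toFinset.2 h)
    have h1 : ∑ᶠ a, φ n a x = 1 := (φ n).sum_eq_one (mem_univ x)
    rwa [← finsum_eq_sum _ hfin, h1] at h2
  refine ⟨ℕ × X, fun p x => (1/2)^(p.1+1) * φ p.1 p.2 x, ?_, ?_, ?_, ?_, ?_⟩
  · exact fun p => continuous_const.mul (φ p.1 p.2).continuous
  · exact fun p x => mul_nonneg (by positivity) ((φ p.1).nonneg p.2 x)
  · intro x
    have hn : ∀ n : ℕ, HasSum (fun a => (1/2:ℝ)^(n+1) * φ n a x) ((1/2)^(n+1)) := by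
      intro n
      simpa using (hlev n x).mul_left ((1/2:ℝ)^(n+1))
    have hval : HasSum (fun n : ℕ => (1/2:ℝ)^(n+1)) 1 := by
      have h := hasSum_geometric_two.mul_left (1/2 : ℝ)
      norm_num at h
      have heq : (fun n : ℕ => (1/2:ℝ)^(n+1)) = fun n : ℕ => (1/2:ℝ) * (1/2)^n := by
        funext n; rw [pow_succ, mul_comm]
      rw [heq]
      convert h using 1
    have hs : Summable fun p : ℕ × X => (1/2:ℝ)^(p.1+1) * φ p.1 p.2 x := by
      rw [summable_prod_of_nonneg
        (fun p => mul_nonneg (by positivity) ((φ p.1).nonneg p.2 x))]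
      refine ⟨fun n => (hn n).summable, ?_⟩
      have heq : (fun n : ℕ => ∑' a : X, (1/2:ℝ)^(n+1) * φ n a x)
          = fun n : ℕ => (1/2:ℝ)^(n+1) := funext fun n => (hn n).tsum_eq
      rw [heq]
      exact hval.summable
    have htsum : ∑' p : ℕ × X, (1/2:ℝ)^(p.1+1) * φ p.1 p.2 x = 1 := by
      rw [Summable.tsum_prod' hs fun n => (hn n).summable]
      rw [tsum_congr fun n : ℕ => (hn n).tsum_eq]
      exact hval.tsum_eq
    exact (Summable.hasSum_iff hs).2 htsum
  · intro p
    have : {x | (1/2:ℝ)^(p.1+1) * φ p.1 p.2 x ≠ 0} = (φ p.1 p.2) ⁻¹' ({0}ᶜ) := by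
      ext x
      simp [mul_ne_zero_iff, pow_ne_zero]
    rw [this]
    exact (φ p.1 p.2).continuous.isOpen_preimage _ isOpen_compl_singleton
  · intro x u hxu hu
    obtain ⟨ε, hε, hball⟩ := Metric.isOpen_iff.1 hu x hxu
    obtain ⟨n, hnε⟩ := exists_pow_lt_of_lt_one (by linarith : (0:ℝ) < ε/2)
      (by norm_num : (1/2 : ℝ) < 1)
    obtain ⟨a, ha⟩ : ∃ a, φ n a x ≠ 0 := by
      by_contra hcon
      push_neg at hcon
      have h0 : HasSum (fun _ : X => (0:ℝ)) 1 := by simpa [hcon] using hlev n x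
      exact one_ne_zero (h0.unique hasSum_zero)
    refine ⟨(n, a), by simpa using ha, ?_⟩
    intro y hy
    simp only [mem_setOf_eq, mul_ne_zero_iff] at hy
    have hy' : y ∈ tsupport (φ n a) := subset_tsupport _ hy.2
    have hx' : x ∈ tsupport (φ n a) := subset_tsupport _ ha
    have hyb := hφ n a hy'
    have hxb := hφ n a hx'
    apply hball
    rw [mem_ball] at *
    have hax : dist a x = dist x a := dist_comm a x
    calc dist y x ≤ dist y a + dist a x := dist_triangle y a x
      _ < (1/2)^n + (1/2)^n := by rw [hax]; exact add_lt_add hyb hxb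
      _ < ε := by linarith
end fwd

/-- Dydak's metrization theorem: `X` is metrizable iff there is a continuous partition of
unity `f : X → l¹(S)` whose point-inverses of stars of vertices form a basis. -/
theorem stmt1 (X : Type) [TopologicalSpace X] [T2Space X] :
    MetrizableSpace X ↔
      ∃ (S : Type) (f : X → lp (fun _ : S => ℝ) 1), IsPU f ∧
        IsTopologicalBasis {B : Set X | ∃ s : S, B = f ⁻¹' {g | g s ≠ 0}} := by
  constructor
  · intro hm
    obtain ⟨S, g, hc, hnn, hsum, hop, hnhds⟩ := exists_pu_coords X
    obtain ⟨F, hFcoe, hFcont⟩ := exists_continuous_lp g hc hnn hsum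
    have hFeq : ∀ s : S, F ⁻¹' {h | h s ≠ 0} = {x | g s x ≠ 0} := by
      intro s
      ext x
      simp only [mem_preimage, mem_setOf_eq]
      rw [show (F x) s = g s x from congrFun (hFcoe x) s]
    refine ⟨S, F, ⟨hFcont, fun x => ?_⟩, ?_⟩
    · constructor
      · intro s
        rw [show (F x) s = g s x from congrFun (hFcoe x) s]
        exact hnn s x
      · have : (fun s => (F x) s) = fun s => g s x := hFcoe x
        rw [this]
        exact hsum x
    · refine isTopologicalBasis_of_isOpen_of_nhds ?_ ?_
      · rintro u ⟨s, rfl⟩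
        rw [hFeq s]
        exact hop s
      · intro a u hau hu
        obtain ⟨s, hs, hsub⟩ := hnhds a u hau hu
        refine ⟨F ⁻¹' {h | h s ≠ 0}, ⟨s, rfl⟩, ?_, ?_⟩
        · rw [hFeq s]; exact hs
        · rw [hFeq s]; exact hsub
  · rintro ⟨S, f, ⟨hc, hpt⟩, hbasis⟩
    have hop : ∀ s : S, IsOpen {g : lp (fun _ : S => ℝ) 1 | g s ≠ 0} := by
      intro s
      have : {g : lp (fun _ : S => ℝ) 1 | g s ≠ 0}
          = (fun g : lp (fun _ : S => ℝ) 1 => g s) ⁻¹' ({0}ᶜ) := by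
        ext g; simp
      rw [this]
      exact (lp_eval_continuous s).isOpen_preimage _ isOpen_compl_singleton
    have hinj : Function.Injective f := by
      intro x y hxy
      by_contra hne
      obtain ⟨u, v, hu, hv, hxu, hyv, huv⟩ := t2_separation hne
      obtain ⟨b, ⟨s, rfl⟩, hxb, hbu⟩ := hbasis.exists_subset_of_mem_open hxu hu
      have hy : y ∈ f ⁻¹' {g | g s ≠ 0} := by
        simp only [mem_preimage, mem_setOf_eq] at hxb ⊢
        rw [← hxy]
        exact hxb
      exact Set.disjoint_left.mp huv (hbu hy) hyv
    have hind : IsInducing f := by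
      constructor
      refine le_antisymm (continuous_iff_le_induced.mp hc) ?_
      rw [hbasis.eq_generateFrom]
      refine le_generateFrom ?_
      rintro b ⟨s, rfl⟩
      exact isOpen_induced (hop s)
    have hemb : IsEmbedding f := ⟨hind, hinj⟩
    exact hemb.metrizableSpace

end
end

section
/- A topological space X is metrizable if and only if there exists a set V and an embedding of X into l¹(V) such that every element of the image has l¹-norm equal to 1. -/
noncomputable section
open Set Topology TopologicalSpace

/-! For each `n` a metric space has a partition of unity `ρₙ` subordinate to the balls of radius
`1 / (n + 1)`, and `x ↦ (ρₙ c x)_c` is a continuous map into the unit sphere of `ℓ¹(X)`.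
Gluing these maps with weights `2⁻⁽ⁿ⁺¹⁾` gives a continuous map `F` into the unit sphere of
`ℓ¹(ℕ × X)`. As the weights are positive, `F y → F x` forces `ρₙ y → ρₙ x` for every `n`; and once
`‖ρₙ y - ρₙ x‖ < ρₙ c x` we get `ρₙ c y > 0`, so `x` and `y` lie in a common ball of radius
`1 / (n + 1)`. Hence `F` is an embedding. Conversely, a subspace of a metric space is
metrizable. -/

open Filter

local notation "ℓ¹[" ι "]" => lp (fun _ : ι => ℝ) 1

theorem lp.hasSum_norm_one {ι : Type*} {E : ι → Type*} [∀ i, NormedAddCommGroup (E i)]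
    (f : lp E 1) : HasSum (fun i => ‖f i‖) ‖f‖ := by
  simpa using lp.hasSum_norm (by norm_num : (0 : ℝ) < (1 : ENNReal).toReal) f

theorem memℓp_one_of_summable_norm {ι : Type*} {E : ι → Type*} [∀ i, NormedAddCommGroup (E i)]
    {g : ∀ i, E i} (h : Summable fun i => ‖g i‖) :
    Memℓp g 1 :=
  memℓp_gen (by simpa using h)

namespace PartitionOfUnity

variable {ι X : Type*} [TopologicalSpace X] (ρ : PartitionOfUnity ι X univ)

theorem hasSum_apply (x : X) : HasSum (fun i => ρ i x) 1 := by
  rw [← ρ.sum_finsupport (mem_univ x)]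
  exact hasSum_sum_of_ne_finset_zero fun i hi => by simpa using hi

def toLp1 (x : X) : ℓ¹[ι] :=
  ⟨fun i => ρ i x, memℓp_one_of_summable_norm <| by
    simpa [abs_of_nonneg (ρ.nonneg _ x)] using (ρ.hasSum_apply x).summable⟩

@[simp]
theorem toLp1_apply (x : X) (i : ι) : ρ.toLp1 x i = ρ i x := rfl

theorem norm_toLp1 (x : X) : ‖ρ.toLp1 x‖ = 1 :=
  (lp.hasSum_norm_one _).unique <| by
    simpa [abs_of_nonneg (ρ.nonneg _ x)] using ρ.hasSum_apply x

theorem norm_toLp1_sub_eq_sum {x y : X} {I : Finset ι} (hx : Function.support (ρ · x) ⊆ I)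
    (hy : Function.support (ρ · y) ⊆ I) : ‖ρ.toLp1 y - ρ.toLp1 x‖ = ∑ i ∈ I, |ρ i y - ρ i x| := by
  refine (lp.hasSum_norm_one _).unique (hasSum_sum_of_ne_finset_zero fun i hi => ?_)
  have hxi : ρ i x = 0 := by simpa using mt (@hx i) hi
  have hyi : ρ i y = 0 := by simpa using mt (@hy i) hi
  simp [hxi, hyi]

theorem continuous_toLp1 : Continuous ρ.toLp1 := by
  refine continuous_iff_continuousAt.2 fun x => ?_
  obtain ⟨I, hI⟩ := ρ.exists_finset_nhds x
  rw [ContinuousAt, tendsto_iff_norm_sub_tendsto_zero]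
  have hlim : Tendsto (fun y => ∑ i ∈ I, |ρ i y - ρ i x|) (𝓝 x) (𝓝 0) := by
    simpa using ((continuous_finsetSum I fun i _ =>
      ((ρ i).continuous.sub (continuous_const (y := ρ i x))).abs).tendsto x)
  refine hlim.congr' ?_
  filter_upwards [hI] with y hy
  rw [ρ.norm_toLp1_sub_eq_sum hI.self_of_nhds.2 hy.2]

end PartitionOfUnity

theorem hasSum_norm_weighted {ι : Type*} {w : ℕ → ℝ} (hw : ∀ n, 0 ≤ w n) (u : ℕ → ℓ¹[ι])
    (hs : Summable fun n => w n * ‖u n‖) :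
    HasSum (fun p : ℕ × ι => ‖w p.1 * u p.1 p.2‖) (∑' n, w n * ‖u n‖) := by
  have hfiber (n : ℕ) : HasSum (fun i => ‖w n * u n i‖) (w n * ‖u n‖) := by
    simpa [abs_of_nonneg (hw n)] using (lp.hasSum_norm_one (u n)).mul_left (w n)
  have hsum : Summable fun p : ℕ × ι => ‖w p.1 * u p.1 p.2‖ :=
    (summable_prod_of_nonneg fun _ => norm_nonneg _).2
      ⟨fun n => (hfiber n).summable, by simpa only [(hfiber _).tsum_eq] using hs⟩
  exact (hsum.hasSum.prod_fiberwise hfiber).unique hs.hasSum ▸ hsum.hasSum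

section WeightedConcat

variable {ι X : Type*} {w : ℕ → ℝ} {f : ℕ → X → ℓ¹[ι]}

theorem summable_weighted_norm (hw : ∀ n, 0 ≤ w n) (hsw : Summable w) (hf : ∀ n x, ‖f n x‖ ≤ 1)
    (x : X) : Summable fun n => w n * ‖f n x‖ :=
  hsw.of_nonneg_of_le (fun n => mul_nonneg (hw n) (norm_nonneg _)) fun n =>
    mul_le_of_le_one_right (hw n) (hf n x)

theorem weighted_norm_sub_le (hw : ∀ n, 0 ≤ w n) (hf : ∀ n x, ‖f n x‖ ≤ 1) (x y : X) (n : ℕ) :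
    w n * ‖f n y - f n x‖ ≤ 2 * w n := by
  have := (norm_sub_le (f n y) (f n x)).trans (add_le_add (hf n y) (hf n x))
  nlinarith [hw n]

theorem summable_weighted_norm_sub (hw : ∀ n, 0 ≤ w n) (hsw : Summable w)
    (hf : ∀ n x, ‖f n x‖ ≤ 1) (x y : X) : Summable fun n => w n * ‖f n y - f n x‖ :=
  (hsw.mul_left 2).of_nonneg_of_le (fun n => mul_nonneg (hw n) (norm_nonneg _))
    (weighted_norm_sub_le hw hf x y)

def weightedConcat (hw : ∀ n, 0 ≤ w n) (hsw : Summable w) (hf : ∀ n x, ‖f n x‖ ≤ 1) (x : X) :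
    ℓ¹[ℕ × ι] :=
  ⟨fun p => w p.1 * f p.1 x p.2, memℓp_one_of_summable_norm
    (hasSum_norm_weighted hw (f · x) (summable_weighted_norm hw hsw hf x)).summable⟩

variable (hw : ∀ n, 0 ≤ w n) (hsw : Summable w) (hf : ∀ n x, ‖f n x‖ ≤ 1)

@[simp]
theorem weightedConcat_apply (x : X) (p : ℕ × ι) :
    weightedConcat hw hsw hf x p = w p.1 * f p.1 x p.2 := rfl

theorem norm_weightedConcat (x : X) : ‖weightedConcat hw hsw hf x‖ = ∑' n, w n * ‖f n x‖ :=
  (lp.hasSum_norm_one _).unique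
    (hasSum_norm_weighted hw (f · x) (summable_weighted_norm hw hsw hf x))

theorem norm_weightedConcat_sub (x y : X) :
    ‖weightedConcat hw hsw hf y - weightedConcat hw hsw hf x‖ = ∑' n, w n * ‖f n y - f n x‖ := by
  refine (lp.hasSum_norm_one _).unique ?_
  simpa [mul_sub] using
    hasSum_norm_weighted hw (fun n => f n y - f n x) (summable_weighted_norm_sub hw hsw hf x y)

theorem weight_mul_norm_sub_le (x y : X) (n : ℕ) :
    w n * ‖f n y - f n x‖ ≤ ‖weightedConcat hw hsw hf y - weightedConcat hw hsw hf x‖ := by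
  rw [norm_weightedConcat_sub]
  exact (summable_weighted_norm_sub hw hsw hf x y).le_tsum n
    fun m _ => mul_nonneg (hw m) (norm_nonneg _)

theorem continuous_weightedConcat [TopologicalSpace X] (hfc : ∀ n, Continuous (f n)) :
    Continuous (weightedConcat hw hsw hf) := by
  refine continuous_iff_continuousAt.2 fun x => ?_
  rw [ContinuousAt, tendsto_iff_norm_sub_tendsto_zero]
  simp_rw [norm_weightedConcat_sub]
  have hcont : Continuous fun y => ∑' n, w n * ‖f n y - f n x‖ := by
    refine continuous_tsum (fun n => continuous_const.mul ((hfc n).sub continuous_const).norm)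
      (hsw.mul_left 2) fun n y => ?_
    rw [Real.norm_of_nonneg (mul_nonneg (hw n) (norm_nonneg _))]
    exact weighted_norm_sub_le hw hf x y n
  simpa using hcont.tendsto x

end WeightedConcat

theorem PartitionOfUnity.exists_dist_lt_of_norm_toLp1_sub_lt {ι X : Type*} [PseudoMetricSpace X]
    {ρ : PartitionOfUnity ι X univ} {c : ι → X} {r : ℝ}
    (hρ : ρ.IsSubordinate fun i => Metric.ball (c i) r) (x : X) :
    ∃ δ > 0, ∀ y, ‖ρ.toLp1 y - ρ.toLp1 x‖ < δ → dist y x < 2 * r := by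
  obtain ⟨i, hi⟩ := ρ.exists_pos (mem_univ x)
  refine ⟨ρ i x, hi, fun y hy => ?_⟩
  have hyi : ρ i y ≠ 0 := by
    intro h0
    have := lp.norm_apply_le_norm one_ne_zero (ρ.toLp1 y - ρ.toLp1 x) i
    simp only [lp.coeFn_sub, Pi.sub_apply, toLp1_apply, h0, zero_sub, norm_neg,
      Real.norm_of_nonneg hi.le] at this
    linarith
  have hx := hρ i (subset_closure (Function.mem_support.2 hi.ne'))
  have hy := hρ i (subset_closure (Function.mem_support.2 hyi))
  rw [Metric.mem_ball] at hx hy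
  linarith [dist_triangle_right y x (c i)]

theorem Continuous.isEmbedding_of_forall_exists_dist_lt {X Y : Type*} [MetricSpace X]
    [PseudoMetricSpace Y] {F : X → Y} (hF : Continuous F)
    (h : ∀ x, ∀ ε > 0, ∃ δ > 0, ∀ y, dist (F y) (F x) < δ → dist y x < ε) : IsEmbedding F := by
  refine IsInducing.isEmbedding <| isInducing_iff_nhds.2 fun x =>
    le_antisymm (hF.tendsto x).le_comap fun s hs => ?_
  obtain ⟨ε, hε, hball⟩ := Metric.mem_nhds_iff.1 hs
  obtain ⟨δ, hδ, hδε⟩ := h x ε hε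
  exact mem_of_superset (preimage_mem_comap (Metric.ball_mem_nhds _ hδ)) fun y hy =>
    hball (hδε y hy)

theorem MetricSpace.exists_isEmbedding_lp_one_norm_eq_one (X : Type) [MetricSpace X] :
    ∃ (V : Type) (f : X → ℓ¹[V]), IsEmbedding f ∧ ∀ x, ‖f x‖ = 1 := by
  choose ρ hρ using fun n : ℕ => PartitionOfUnity.exists_isSubordinate isClosed_univ
    (fun c : X => Metric.ball c (1 / (n + 1))) (fun _ => Metric.isOpen_ball)
    (fun x _ => mem_iUnion.2 ⟨x, Metric.mem_ball_self Nat.one_div_pos_of_nat⟩)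
  have hw : ∀ n : ℕ, 0 ≤ (1 : ℝ) / 2 / 2 ^ n := fun n => by positivity
  have hsw := hasSum_geometric_two' (1 : ℝ)
  have hf : ∀ n x, ‖(ρ n).toLp1 x‖ ≤ 1 := fun n x => ((ρ n).norm_toLp1 x).le
  refine ⟨ℕ × X, weightedConcat hw hsw.summable hf, ?_, fun x => ?_⟩
  · refine (continuous_weightedConcat hw hsw.summable hf fun n => (ρ n).continuous_toLp1)
      |>.isEmbedding_of_forall_exists_dist_lt fun x ε hε => ?_
    obtain ⟨n, hn⟩ := exists_nat_one_div_lt (half_pos hε)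
    obtain ⟨δ, hδ, hδx⟩ := PartitionOfUnity.exists_dist_lt_of_norm_toLp1_sub_lt (hρ n) x
    refine ⟨1 / 2 / 2 ^ n * δ, by positivity, fun y hy => ?_⟩
    rw [dist_eq_norm] at hy
    have hδy := lt_of_mul_lt_mul_left
      ((weight_mul_norm_sub_le hw hsw.summable hf x y n).trans_lt hy) (hw n)
    linarith [hδx y hδy]
  · simpa [norm_weightedConcat, PartitionOfUnity.norm_toLp1] using hsw.tsum_eq

theorem stmt2_general (X : Type) [TopologicalSpace X] :
    MetrizableSpace X ↔
      ∃ (V : Type) (f : X → lp (fun _ : V => ℝ) 1),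
        IsEmbedding f ∧ ∀ x : X, ‖f x‖ = 1 := by
  constructor
  · intro _
    let _ := TopologicalSpace.metrizableSpaceMetric X
    exact MetricSpace.exists_isEmbedding_lp_one_norm_eq_one X
  · rintro ⟨V, f, hf, -⟩
    exact hf.metrizableSpace

/-- `X` is metrizable iff it embeds into some `l¹(V)` with image in the unit sphere. -/
theorem stmt2 (X : Type) [TopologicalSpace X] [T2Space X] :
    MetrizableSpace X ↔
      ∃ (V : Type) (f : X → lp (fun _ : V => ℝ) 1),
        IsEmbedding f ∧ ∀ x : X, ‖f x‖ = 1 :=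
  stmt2_general X
end
end

section
/- If U is a nonempty open subset of a topological group G, then the open cover 𝒰 = {g·U : g ∈ G} of G admits a 𝒰-small partition of unity. -/
noncomputable section
open Set Topology TopologicalSpace
open scoped Pointwise

/-! A uniform-space form of the Birkhoff–Kakutani theorem: an entourage `V` lies in a coarser
uniformity with a countable basis, which is pseudometrizable, so there is a uniformly continuous
`π : X → Y` into a pseudometric space with `dist (π x) (π y) < ε → (x, y) ∈ V`. Pseudometric spaces
are paracompact; pulling back along `π` a partition of unity subordinate to the `ε`-balls gives one
whose carriers lie in the `V`-balls. For a topological group with its left uniformity and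
`V = {(x, y) | x⁻¹ * y ∈ u⁻¹ • U}` with `u ∈ U`, the `V`-ball of `x` is the translate
`(x * u⁻¹) • U`. -/

open Function Filter Uniformity
open scoped SetRel

section

variable {ι X : Type} [TopologicalSpace X]

namespace PartitionOfUnity

theorem hasSum_apply_s4 (ρ : PartitionOfUnity ι X univ) (x : X) : HasSum (ρ · x) 1 := by
  rw [← ρ.sum_finsupport (mem_univ x)]
  refine hasSum_sum_of_ne_finset_zero fun i hi => ?_
  simpa [ρ.mem_finsupport] using hi

theorem memℓp_one_apply (ρ : PartitionOfUnity ι X univ) (x : X) : Memℓp (ρ · x) 1 :=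
  memℓp_gen <| by simpa [abs_of_nonneg (ρ.nonneg _ x)] using (ρ.hasSum_apply_s4 x).summable

def toLp (ρ : PartitionOfUnity ι X univ) (x : X) : lp (fun _ : ι => ℝ) 1 :=
  ⟨(ρ · x), ρ.memℓp_one_apply x⟩

@[simp]
theorem toLp_apply (ρ : PartitionOfUnity ι X univ) (x : X) (i : ι) : ρ.toLp x i = ρ i x := rfl

open scoped Classical in
theorem continuous_toLp (ρ : PartitionOfUnity ι X univ) : Continuous ρ.toLp := by
  refine continuous_iff_continuousAt.2 fun x₀ => ?_
  obtain ⟨I, hI⟩ := ρ.exists_finset_nhds x₀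
  have hsum : Continuous fun x => ∑ i ∈ I, lp.single 1 i (ρ i x) :=
    continuous_finsetSum I fun i _ => (lp.isometry_single i).continuous.comp (ρ i).continuous
  refine hsum.continuousAt.congr (hI.mono fun x hx => lp.ext <| funext fun j => ?_)
  simp only [lp.coeFn_sum, Finset.sum_apply, lp.single_apply, Pi.single_apply, Finset.sum_ite_eq,
    toLp_apply]
  split_ifs with hj
  · rfl
  · exact (not_not.1 fun h => hj (hx.2 h)).symm

theorem isPU_toLp (ρ : PartitionOfUnity ι X univ) : IsPU ρ.toLp :=
  ⟨ρ.continuous_toLp, fun x => ⟨fun i => ρ.nonneg i x, ρ.hasSum_apply_s4 x⟩⟩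

end PartitionOfUnity

theorem IsPU.comp {Y S : Type} [TopologicalSpace Y] {f : Y → lp (fun _ : S => ℝ) 1} (hf : IsPU f)
    {π : X → Y} (hπ : Continuous π) : IsPU (f ∘ π) :=
  ⟨hf.1.comp hπ, fun x => hf.2 (π x)⟩

theorem exists_isPU_subordinate [NormalSpace X] [ParacompactSpace X] (V : ι → Set X)
    (hV : ∀ i, IsOpen (V i)) (hcov : ⋃ i, V i = univ) :
    ∃ f : X → lp (fun _ : ι => ℝ) 1, IsPU f ∧ ∀ i, {x | f x i ≠ 0} ⊆ V i := by
  obtain ⟨ρ, hρ⟩ := PartitionOfUnity.exists_isSubordinate isClosed_univ V hV hcov.ge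
  exact ⟨ρ.toLp, ρ.isPU_toLp, fun i => (subset_tsupport (ρ i)).trans (hρ i)⟩

end

namespace UniformSpace

variable {X : Type} [uX : UniformSpace X]

theorem exists_seq_comp_subset {V : SetRel X X} (hV : V ∈ 𝓤 X) :
    ∃ U : ℕ → SetRel X X, (∀ n, U n ∈ 𝓤 X) ∧ (∀ n, (U n).IsSymm) ∧
      (∀ n, U (n + 1) ○ U (n + 1) ⊆ U n) ∧ U 0 ⊆ V := by
  choose! t htmem htsymm htcomp using fun s (hs : s ∈ 𝓤 X) => comp_symm_mem_uniformity_sets hs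
  have hmem : ∀ n, t^[n] V ∈ 𝓤 X := by
    intro n
    induction n with
    | zero => exact hV
    | succ n ih => exact iterate_succ_apply' t n V ▸ htmem _ ih
  refine ⟨fun n => t^[n + 1] V, fun n => hmem (n + 1), fun n => ?_, fun n => ?_, ?_⟩
  · dsimp only
    rw [iterate_succ_apply']
    exact htsymm _ (hmem n)
  · dsimp only
    rw [iterate_succ_apply' t (n + 1)]
    exact htcomp _ (hmem (n + 1))
  · exact (subset_comp_self_of_mem_uniformity (htmem V hV)).trans (htcomp V hV)

theorem exists_le_isCountablyGenerated {V : SetRel X X} (hV : V ∈ 𝓤 X) :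
    ∃ u : UniformSpace X, uX ≤ u ∧ (𝓤[u]).IsCountablyGenerated ∧ V ∈ 𝓤[u] := by
  obtain ⟨U, hU, hsymm, hcomp, hV⟩ := exists_seq_comp_subset hV
  have hanti : Antitone U := antitone_nat_of_succ_le fun n =>
    (subset_comp_self_of_mem_uniformity (hU (n + 1))).trans (hcomp n)
  have hB := HasAntitoneBasis.iInf_principal hanti
  let core : Core X := Core.mk' (⨅ n, 𝓟 (U n))
    (fun r hr x => by
      obtain ⟨n, hn⟩ := hB.mem_iff.1 hr
      exact hn (refl_mem_uniformity (hU n)))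
    (fun r hr => by
      obtain ⟨n, hn⟩ := hB.mem_iff.1 hr
      exact hB.mem_iff.2 ⟨n, fun p hp => hn ((hsymm n).symm _ _ hp)⟩)
    (fun r hr => by
      obtain ⟨n, hn⟩ := hB.mem_iff.1 hr
      exact ⟨U (n + 1), hB.mem (n + 1), (hcomp n).trans hn⟩)
  refine ⟨ofCore core, UniformSpace.le_def.2 ?_, ?_, ?_⟩
  · exact le_iInf fun n => le_principal_iff.2 (hU n)
  · exact hB.isCountablyGenerated
  · exact mem_iInf_of_mem 0 (mem_principal.2 hV)

theorem exists_uniformContinuous_pseudoMetric {V : SetRel X X} (hV : V ∈ 𝓤 X) :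
    ∃ (Y : Type) (_ : PseudoMetricSpace Y) (π : X → Y), Surjective π ∧ UniformContinuous π ∧
      ∃ ε > 0, ∀ x y, dist (π x) (π y) < ε → (x, y) ∈ V := by
  obtain ⟨u, hle, hcg, hVu⟩ := exists_le_isCountablyGenerated hV
  obtain ⟨m, rfl⟩ := @UniformSpace.metrizable_uniformity X u hcg
  refine ⟨X, m, id, surjective_id, tendsto_id.mono_right (UniformSpace.le_def.1 hle : 𝓤 X ≤ _), ?_⟩
  exact Metric.mem_uniformity_dist.1 hVu

theorem existsUSmallPU_of_ball_subset {𝒰 : Set (Set X)} {V : SetRel X X} (hV : V ∈ 𝓤 X)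
    (h𝒰 : ∀ x, ∃ U ∈ 𝒰, ball x V ⊆ U) : ExistsUSmallPU 𝒰 := by
  obtain ⟨Y, _, π, hsurj, hπ, ε, hε, hdist⟩ := exists_uniformContinuous_pseudoMetric hV
  obtain ⟨f, hf, hsupp⟩ := exists_isPU_subordinate (fun x => Metric.ball (π x) ε)
    (fun _ => Metric.isOpen_ball) (iUnion_eq_univ_iff.2 fun y =>
      let ⟨x, hx⟩ := hsurj y; ⟨x, hx ▸ Metric.mem_ball_self hε⟩)
  refine ⟨X, f ∘ π, hf.comp hπ.continuous, fun x => ?_⟩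
  obtain ⟨U, hU, hball⟩ := h𝒰 x
  exact ⟨U, hU, fun z hz => hball (hdist x z (Metric.mem_ball'.1 (hsupp x hz)))⟩

end UniformSpace

/-- For a nonempty open `U` in a topological group `G`, the cover by translates of `U`
admits a small partition of unity. -/
theorem stmt4 (G : Type) [Group G] [TopologicalSpace G] [IsTopologicalGroup G]
    (U : Set G) (hU : IsOpen U) (hne : U.Nonempty) :
    ExistsUSmallPU (Set.range fun g : G => g • U) := by
  obtain ⟨u, hu⟩ := hne
  let := IsTopologicalGroup.leftUniformSpace G
  have hW : u⁻¹ • U ∈ 𝓝 (1 : G) := (hU.smul u⁻¹).mem_nhds ⟨u, hu, inv_mul_cancel u⟩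
  refine UniformSpace.existsUSmallPU_of_ball_subset (preimage_mem_comap hW) fun x =>
    ⟨(x * u⁻¹) • U, mem_range_self _, fun y hy => ?_⟩
  rw [mul_smul, mem_smul_set_iff_inv_smul_mem]
  exact hy
end
end

section
/- Let X be a normal topological space and 𝒰 a finite open cover of X. Then there exists a 𝒰-small partition of unity on X, i.e., continuous functions f_U : X → [0,1] for U ∈ 𝒰 with ∑_U f_U ≡ 1 and f_U⁻¹((0,1]) ⊆ U for each U. -/
noncomputable section
open Set Topology TopologicalSpace

/-- Every finite open cover of a normal space admits a `𝒰`-small partition of unity. -/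
theorem stmt7 (X : Type) [TopologicalSpace X] [NormalSpace X] [T1Space X]
    (𝒰 : Set (Set X)) (hfin : 𝒰.Finite) (hcov : IsOpenCover 𝒰) :
    ∃ f : 𝒰 → X → ℝ, (∀ U, Continuous (f U)) ∧ (∀ U x, f U x ∈ Icc (0 : ℝ) 1) ∧
      (∀ x, HasSum (fun U => f U x) 1) ∧
      ∀ U : 𝒰, {x : X | f U x ≠ 0} ⊆ (U : Set X) := by
  haveI : Finite 𝒰 := hfin.to_subtype
  haveI : Fintype 𝒰 := Fintype.ofFinite _
  obtain ⟨ho, hcovU⟩ := hcov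
  have hU : (univ : Set X) ⊆ ⋃ U : 𝒰, (U : Set X) := by
    rw [← sUnion_eq_iUnion, hcovU]
  obtain ⟨f, hf⟩ := PartitionOfUnity.exists_isSubordinate_of_locallyFinite isClosed_univ
    (fun U : 𝒰 => (U : Set X)) (fun U => ho U U.2)
    (locallyFinite_of_finite _) hU
  refine ⟨fun U x => f U x, fun U => (f U).continuous, fun U x => ⟨f.nonneg U x, f.le_one U x⟩,
    fun x => ?_, fun U => ?_⟩
  · have h1 : ∑ᶠ U, f U x = 1 := f.sum_eq_one (mem_univ x)
    rw [finsum_eq_sum_of_fintype] at h1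
    exact h1 ▸ hasSum_fintype _
  · exact fun x hx => hf U (subset_closure (by simpa using hx))
end
end

section
/- Let X be a normal space and 𝒰 a σ-discrete open cover of X. Then 𝒰 admits a 𝒰-small partition of unity if and only if 𝒰 has a σ-discrete closed refinement. -/
/-!
Given a `𝒰`-small partition of unity `f`, assign to each coordinate `s` a member `U s ∈ 𝒰`
containing its carrier. The supremum `q_U` of the coordinates with `U s = U` is a
1-Lipschitz function of `f x ∈ ℓ¹`, so the sets `{q_U ≥ 1/(m+1)}` are closed, lie in `U`,
and for fixed `m` and `U` ranging over the discrete family `u n` they form a discrete family.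

Conversely, a σ-discrete closed refinement yields closed sets `G n V ⊆ V` (the union of the
members of its `n`-th discrete family assigned to `V`). Urysohn functions for `G n V ⊆ V`,
weighted by summable positive constants, have supports that are discrete for each fixed level,
so each level is locally a single coordinate of `ℓ¹` and the levels converge uniformly: this
gives a continuous nowhere vanishing map into `ℓ¹` with nonnegative coordinates, and dividing
by its norm gives the partition of unity.
-/

noncomputable section
open Set Topology TopologicalSpace

open Filter Function
open scoped ENNReal

section Discrete

variable {X : Type} [TopologicalSpace X]

lemma DiscreteSetFam.mono {𝒜 ℬ : Set (Set X)} (h : DiscreteSetFam ℬ) (hs : 𝒜 ⊆ ℬ) :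
    DiscreteSetFam 𝒜 := fun x ↦
  let ⟨N, hN, hsub⟩ := h x
  ⟨N, hN, fun _ hA _ hB ↦ hsub ⟨hs hA.1, hA.2⟩ ⟨hs hB.1, hB.2⟩⟩

lemma DiscreteSetFam.locallyFinite {𝒜 : Set (Set X)} (h : DiscreteSetFam 𝒜) :
    LocallyFinite fun A : 𝒜 ↦ (A : Set X) := fun x ↦ by
  obtain ⟨N, hN, hsub⟩ := h x
  exact ⟨N, hN, Set.Subsingleton.finite fun A hA B hB ↦ Subtype.ext (hsub ⟨A.2, hA⟩ ⟨B.2, hB⟩)⟩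

lemma DiscreteSetFam.isClosed_sUnion {𝒜 : Set (Set X)} (h : DiscreteSetFam 𝒜)
    (hc : ∀ A ∈ 𝒜, IsClosed A) : IsClosed (⋃₀ 𝒜) := by
  rw [sUnion_eq_iUnion]
  exact h.locallyFinite.isClosed_iUnion fun A ↦ hc A A.2

lemma DiscreteSetFam.image_of_subset {𝒜 : Set (Set X)} (h : DiscreteSetFam 𝒜)
    {F : Set X → Set X} (hF : ∀ A ∈ 𝒜, F A ⊆ A) : DiscreteSetFam (F '' 𝒜) := fun x ↦ by
  obtain ⟨N, hN, hsub⟩ := h x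
  refine ⟨N, hN, ?_⟩
  rintro _ ⟨⟨A, hA, rfl⟩, hAN⟩ _ ⟨⟨B, hB, rfl⟩, hBN⟩
  rw [hsub ⟨hA, hAN.mono (inter_subset_inter_left N (hF A hA))⟩
    ⟨hB, hBN.mono (inter_subset_inter_left N (hF B hB))⟩]

lemma DiscreteSetFam.discreteFam_of_subset {𝒜 : Set (Set X)} (h : DiscreteSetFam 𝒜)
    {A : 𝒜 → Set X} (hA : ∀ V, A V ⊆ V) : DiscreteFam A := fun x ↦ by
  obtain ⟨N, hN, hsub⟩ := h x
  refine ⟨N, hN, fun V hV W hW ↦ Subtype.ext ?_⟩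
  exact hsub ⟨V.2, hV.mono (inter_subset_inter_left N (hA V))⟩
    ⟨W.2, hW.mono (inter_subset_inter_left N (hA W))⟩

end Discrete

section Lp

variable {X S : Type} [TopologicalSpace X] {ψ : S → X → ℝ}

lemma DiscreteFam.eventually_eq_zero [Nonempty S] (h : DiscreteFam fun s ↦ support (ψ s))
    (x : X) : ∃ s₀, ∀ᶠ y in 𝓝 x, ∀ s ≠ s₀, ψ s y = 0 := by
  obtain ⟨N, hN, hsub⟩ := h x
  have meets {y s} (hy : y ∈ N) (hne : ψ s y ≠ 0) : s ∈ {s | (support (ψ s) ∩ N).Nonempty} :=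
    ⟨y, hne, hy⟩
  rcases hsub.eq_empty_or_singleton with hempty | ⟨s₀, hs₀⟩
  · refine ⟨Classical.arbitrary S, eventually_of_mem hN fun y hy s _ ↦ ?_⟩
    by_contra hne
    simpa [hempty] using meets hy hne
  · refine ⟨s₀, eventually_of_mem hN fun y hy s hs ↦ ?_⟩
    by_contra hne
    exact hs (by simpa [hs₀] using meets hy hne)

lemma DiscreteFam.memℓp (h : DiscreteFam fun s ↦ support (ψ s)) (x : X) (p : ℝ≥0∞) :
    Memℓp (fun s ↦ ψ s x) p := by
  obtain ⟨N, hN, hsub⟩ := h x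
  refine (memℓp_zero_iff.2 ((hsub.anti fun s hs ↦ ?_).finite)).of_exponent_ge zero_le
  exact ⟨x, hs, mem_of_mem_nhds hN⟩

def DiscreteFam.toLp (h : DiscreteFam fun s ↦ support (ψ s)) (p : ℝ≥0∞) (x : X) :
    lp (fun _ : S ↦ ℝ) p :=
  ⟨fun s ↦ ψ s x, h.memℓp x p⟩

variable {p : ℝ≥0∞} (h : DiscreteFam fun s ↦ support (ψ s))

@[simp]
lemma DiscreteFam.toLp_apply (x : X) (s : S) : h.toLp p x s = ψ s x := rfl

lemma DiscreteFam.toLp_eq_single [DecidableEq S] {y : X} {s₀ : S} (hy : ∀ s ≠ s₀, ψ s y = 0) :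
    h.toLp p y = lp.single p s₀ (ψ s₀ y) := by
  ext s
  by_cases hs : s = s₀
  · subst hs; simp
  · simp [hy s hs, hs]

variable [Fact (1 ≤ p)]

lemma DiscreteFam.continuous_toLp (hψ : ∀ s, Continuous (ψ s)) : Continuous (h.toLp p) := by
  classical
  cases isEmpty_or_nonempty S
  · exact continuous_of_const fun _ _ ↦ lp.ext (funext isEmptyElim)
  refine continuous_iff_continuousAt.2 fun x ↦ ?_
  obtain ⟨s₀, hs₀⟩ := h.eventually_eq_zero x
  have hsingle : Continuous fun y ↦ lp.single (E := fun _ : S ↦ ℝ) p s₀ (ψ s₀ y) :=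
    (lp.isometry_single s₀).continuous.comp (hψ s₀)
  exact hsingle.continuousAt.congr (hs₀.mono fun y hy ↦ (h.toLp_eq_single hy).symm)

lemma DiscreteFam.norm_toLp_le {x : X} {c : ℝ} (hc : 0 ≤ c) (hψc : ∀ s, |ψ s x| ≤ c) :
    ‖h.toLp p x‖ ≤ c := by
  classical
  cases isEmpty_or_nonempty S
  · simpa [lp.eq_zero' (h.toLp p x)] using hc
  obtain ⟨s₀, hs₀⟩ := h.eventually_eq_zero x
  rw [h.toLp_eq_single hs₀.self_of_nhds, lp.norm_single (zero_lt_one.trans_le Fact.out)]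
  exact hψc s₀

end Lp

section Sigma

variable {X ι : Type} {T : ι → Type} [TopologicalSpace X] {φ : (Σ i, T i) → X → ℝ}

lemma discreteFam_support_ite [DecidableEq ι] {i : ι}
    (h : DiscreteFam fun t : T i ↦ support (φ ⟨i, t⟩)) :
    DiscreteFam fun s : (Σ i, T i) ↦ support (if s.1 = i then φ s else 0) := fun x ↦ by
  obtain ⟨N, hN, hsub⟩ := h x
  refine ⟨N, hN, ?_⟩
  rintro ⟨j, t⟩ ⟨y, hy, hyN⟩ ⟨j', t'⟩ ⟨y', hy', hy'N⟩
  have hj : j = i := by by_contra hj; simp [hj] at hy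
  have hj' : j' = i := by by_contra hj'; simp [hj'] at hy'
  subst hj hj'
  simp only at hy hy'
  rw [hsub ⟨y, hy, hyN⟩ ⟨y', hy', hy'N⟩]

theorem exists_continuous_lp_of_sigmaDiscrete {p : ℝ≥0∞} [Fact (1 ≤ p)] {c : ι → ℝ}
    (hφ : ∀ s, Continuous (φ s)) (hdisc : ∀ i, DiscreteFam fun t : T i ↦ support (φ ⟨i, t⟩))
    (hc : Summable c) (hφc : ∀ i t x, |φ ⟨i, t⟩ x| ≤ c i) :
    ∃ F : X → lp (fun _ : (Σ i, T i) ↦ ℝ) p, Continuous F ∧ ∀ x s, F x s = φ s x := by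
  classical
  set ψ : ι → (Σ i, T i) → X → ℝ := fun i s ↦ if s.1 = i then φ s else 0 with hψ_def
  have hψ (i : ι) : DiscreteFam fun s ↦ support (ψ i s) := discreteFam_support_ite (hdisc i)
  have hψc (i : ι) (x : X) : ‖(hψ i).toLp p x‖ ≤ |c i| := by
    refine (hψ i).norm_toLp_le (abs_nonneg _) fun ⟨j, t⟩ ↦ ?_
    simp only [hψ_def]
    split_ifs with hj
    · subst hj
      exact (hφc _ t x).trans (le_abs_self _)
    · simp
  have hψ_cont (i : ι) (s : Σ i, T i) : Continuous (ψ i s) := by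
    simp only [hψ_def]
    split_ifs
    exacts [hφ s, continuous_const]
  refine ⟨fun x ↦ ∑' i, (hψ i).toLp p x,
    continuous_tsum (fun i ↦ (hψ i).continuous_toLp (hψ_cont i)) hc.abs hψc, fun x s ↦ ?_⟩
  have hsum : Summable fun i ↦ (hψ i).toLp p x := .of_norm_bounded hc.abs (hψc · x)
  calc (∑' i, (hψ i).toLp p x) s = ∑' i, ψ i s x := (lp.evalCLM ℝ _ p s).map_tsum hsum
    _ = φ s x := by
      rw [tsum_eq_single s.1 fun i hi ↦ by simp [hψ_def, Ne.symm hi]]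
      simp [hψ_def]

end Sigma

section PartitionOfUnity

variable {X S : Type} [TopologicalSpace X]

lemma lp.hasSum_norm_of_nonneg {v : lp (fun _ : S ↦ ℝ) 1} (hv : ∀ s, 0 ≤ v s) :
    HasSum (fun s ↦ v s) ‖v‖ := by
  simpa [abs_of_nonneg (hv _)] using lp.hasSum_norm (p := 1) (by norm_num) v

lemma isPU_inv_norm_smul {F : X → lp (fun _ : S ↦ ℝ) 1} (hF : Continuous F)
    (hnn : ∀ x s, 0 ≤ F x s) (hne : ∀ x, F x ≠ 0) : IsPU fun x ↦ ‖F x‖⁻¹ • F x := by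
  have hnorm (x : X) : ‖F x‖ ≠ 0 := norm_ne_zero_iff.2 (hne x)
  refine ⟨(hF.norm.inv₀ hnorm).smul hF, fun x ↦ ⟨fun s ↦ ?_, ?_⟩⟩
  · simpa using mul_nonneg (inv_nonneg.2 (norm_nonneg _)) (hnn x s)
  · have := (lp.hasSum_norm_of_nonneg (hnn x)).mul_left ‖F x‖⁻¹
    rw [inv_mul_cancel₀ (hnorm x)] at this
    simpa using this

lemma existsUSmallPU_of_continuous_lp {𝒰 : Set (Set X)} {F : X → lp (fun _ : S ↦ ℝ) 1}
    (hF : Continuous F) (hnn : ∀ x s, 0 ≤ F x s) (hne : ∀ x, F x ≠ 0)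
    (hsmall : ∀ s, ∃ U ∈ 𝒰, {x | F x s ≠ 0} ⊆ U) : ExistsUSmallPU 𝒰 := by
  refine ⟨S, _, isPU_inv_norm_smul hF hnn hne, fun s ↦ ?_⟩
  obtain ⟨U, hU, hsub⟩ := hsmall s
  exact ⟨U, hU, fun x hx ↦ hsub (by simpa using hx : F x ≠ 0 ∧ F x s ≠ 0).2⟩

end PartitionOfUnity

section FromClosedRefinement

variable {X : Type} [TopologicalSpace X]

lemma HasSigmaDiscreteClosedRefinement.exists_isClosed_subset {𝒰 : Set (Set X)}
    (h : HasSigmaDiscreteClosedRefinement 𝒰) :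
    ∃ G : ℕ → Set X → Set X, (∀ n V, IsClosed (G n V)) ∧ (∀ n V, G n V ⊆ V) ∧
      ∀ x, ∃ n, ∃ V ∈ 𝒰, x ∈ G n V := by
  obtain ⟨D, hD_disc, hD_closed, hD_sub, hD_cover⟩ := h
  choose! V hV𝒰 hFV using hD_sub
  refine ⟨fun n W ↦ ⋃₀ {F | F ∈ D n ∧ V n F = W}, fun n W ↦ ?_, ?_, fun x ↦ ?_⟩
  · exact ((hD_disc n).mono fun F hF ↦ hF.1).isClosed_sUnion fun F hF ↦ hD_closed n F hF.1
  · rintro n W x ⟨F, ⟨hF, rfl⟩, hxF⟩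
    exact hFV n F hF hxF
  · obtain ⟨F, hF, hxF⟩ := hD_cover ▸ mem_univ x
    obtain ⟨n, hFn⟩ := mem_iUnion.1 hF
    exact ⟨n, V n F, hV𝒰 n F hFn, F, ⟨hFn, rfl⟩, hxF⟩

lemma exists_pos_summable (ι : Type*) [Countable ι] :
    ∃ c : ι → ℝ, (∀ i, 0 < c i) ∧ Summable c := by
  cases nonempty_encodable ι
  obtain ⟨c, hc_pos, a, ha, -⟩ := posSumOfEncodable one_pos ι
  exact ⟨c, hc_pos, ha.summable⟩

theorem existsUSmallPU_of_isClosed_subset [NormalSpace X] {ι : Type} [Countable ι]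
    {u : ι → Set (Set X)} (hd : ∀ i, DiscreteSetFam (u i)) (hopen : ∀ i, ∀ U ∈ u i, IsOpen U)
    {G : ℕ → Set X → Set X} (hG_closed : ∀ n V, IsClosed (G n V)) (hG_sub : ∀ n V, G n V ⊆ V)
    (hG_cover : ∀ x, ∃ n, ∃ V ∈ ⋃ i, u i, x ∈ G n V) : ExistsUSmallPU (⋃ i, u i) := by
  obtain ⟨c, hc_pos, hc⟩ := exists_pos_summable (ℕ × ι)
  have hury (s : Σ k : ℕ × ι, u k.2) : ∃ g : C(X, ℝ), EqOn g 0 (s.2 : Set X)ᶜ ∧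
      EqOn g 1 (G s.1.1 s.2) ∧ ∀ x, g x ∈ Icc (0 : ℝ) 1 :=
    exists_continuous_zero_one_of_isClosed (hopen _ _ s.2.2).isClosed_compl (hG_closed _ _)
      (disjoint_compl_left.mono_right (hG_sub _ _))
  choose g hg0 hg1 hg01 using hury
  set φ : (Σ k : ℕ × ι, u k.2) → X → ℝ := fun s x ↦ c s.1 * g s x
  have hφ_support (s : Σ k : ℕ × ι, u k.2) : support (φ s) ⊆ s.2 :=
    (support_mul_subset_right _ _).trans fun x hx ↦ by_contra fun h ↦ hx (hg0 s h)
  have hφc (k : ℕ × ι) (V : u k.2) (x : X) : |φ ⟨k, V⟩ x| ≤ c k := by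
    rw [abs_of_nonneg (mul_nonneg (hc_pos k).le (hg01 _ x).1)]
    exact mul_le_of_le_one_right (hc_pos k).le (hg01 _ x).2
  obtain ⟨F, hF, hFφ⟩ := exists_continuous_lp_of_sigmaDiscrete (p := 1) (φ := φ)
    (fun s ↦ continuous_const.mul (g s).continuous)
    (fun k ↦ (hd k.2).discreteFam_of_subset fun V ↦ hφ_support ⟨k, V⟩) hc hφc
  refine existsUSmallPU_of_continuous_lp hF (fun x s ↦ ?_) (fun x ↦ ?_)
    fun s ↦ ⟨s.2, mem_iUnion.2 ⟨s.1.2, s.2.2⟩,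
      fun x hx ↦ hφ_support s (show φ s x ≠ 0 from hFφ x s ▸ hx)⟩
  · rw [hFφ]
    exact mul_nonneg (hc_pos _).le (hg01 s x).1
  · obtain ⟨n, V, hV, hxV⟩ := hG_cover x
    obtain ⟨i, hVi⟩ := mem_iUnion.1 hV
    set s₀ : Σ k : ℕ × ι, u k.2 := ⟨(n, i), V, hVi⟩
    have hFx : F x s₀ = c (n, i) := by
      rw [hFφ]
      simpa using congrArg (c (n, i) * ·) (hg1 s₀ hxV)
    exact fun h0 ↦ (hc_pos (n, i)).ne (by simpa [h0] using hFx)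

end FromClosedRefinement

section FromPartitionOfUnity

variable {X S : Type} [TopologicalSpace X] {p : ℝ≥0∞}

def coordSup (T : Set S) (v : lp (fun _ : S ↦ ℝ) p) : ℝ :=
  sSup (insert 0 ((fun s ↦ v s) '' T))

lemma bddAbove_coordSup_set [Fact (1 ≤ p)] (T : Set S) (v : lp (fun _ : S ↦ ℝ) p) :
    BddAbove (insert 0 ((fun s ↦ v s) '' T)) := by
  refine ⟨‖v‖, ?_⟩
  rintro _ (rfl | ⟨s, -, rfl⟩)
  · exact norm_nonneg v
  · exact (le_abs_self _).trans (lp.norm_apply_le_norm (zero_lt_one.trans_le Fact.out).ne' v s)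

lemma coordSup_nonneg [Fact (1 ≤ p)] (T : Set S) (v : lp (fun _ : S ↦ ℝ) p) : 0 ≤ coordSup T v :=
  le_csSup (bddAbove_coordSup_set T v) (mem_insert _ _)

lemma le_coordSup [Fact (1 ≤ p)] {T : Set S} {s : S} (hs : s ∈ T) (v : lp (fun _ : S ↦ ℝ) p) :
    v s ≤ coordSup T v :=
  le_csSup (bddAbove_coordSup_set T v) (mem_insert_of_mem _ ⟨s, hs, rfl⟩)

lemma exists_pos_of_coordSup_pos {T : Set S} {v : lp (fun _ : S ↦ ℝ) p}
    (h : 0 < coordSup T v) : ∃ s ∈ T, 0 < v s := by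
  obtain ⟨a, ha, hpos⟩ := exists_lt_of_lt_csSup (insert_nonempty _ _) h
  rcases ha with rfl | ⟨s, hs, rfl⟩
  exacts [absurd hpos (lt_irrefl 0), ⟨s, hs, hpos⟩]

lemma lipschitzWith_coordSup [Fact (1 ≤ p)] (T : Set S) :
    LipschitzWith 1 (coordSup (p := p) T) := by
  refine .of_le_add fun v w ↦ csSup_le (insert_nonempty _ _) ?_
  rintro _ (rfl | ⟨s, hs, rfl⟩)
  · exact add_nonneg (coordSup_nonneg T w) dist_nonneg
  · calc v s ≤ w s + dist v w := by
          have := (lp.lipschitzWith_one_eval (E := fun _ : S ↦ ℝ) p s).dist_le_mul v w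
          rw [NNReal.coe_one, one_mul, Real.dist_eq] at this
          linarith [le_abs_self (v s - w s)]
      _ ≤ coordSup T w + dist v w := by gcongr; exact le_coordSup hs w

lemma hasSigmaDiscreteClosedRefinement_of_continuous {u : ℕ → Set (Set X)}
    (hd : ∀ n, DiscreteSetFam (u n)) {q : Set X → X → ℝ} (hq : ∀ U, Continuous (q U))
    (hqU : ∀ U, {x | 0 < q U x} ⊆ U) (hcover : ∀ x, ∃ n, ∃ U ∈ u n, 0 < q U x) :
    HasSigmaDiscreteClosedRefinement (⋃ n, u n) := by
  set F : Set X → ℕ → Set X := fun U m ↦ {x | ((m : ℝ) + 1)⁻¹ ≤ q U x}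
  have hF_sub (U : Set X) (m : ℕ) : F U m ⊆ U :=
    fun x hx ↦ hqU U (show 0 < q U x from Nat.inv_pos_of_nat.trans_le hx)
  refine ⟨fun k ↦ (F · k.unpair.2) '' u k.unpair.1,
    fun k ↦ (hd _).image_of_subset fun U _ ↦ hF_sub U _, ?_, ?_, ?_⟩
  · rintro k _ ⟨U, -, rfl⟩
    exact isClosed_le continuous_const (hq U)
  · rintro k _ ⟨U, hU, rfl⟩
    exact ⟨U, mem_iUnion.2 ⟨_, hU⟩, hF_sub U _⟩
  · refine eq_univ_of_forall fun x ↦ ?_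
    obtain ⟨n, U, hU, hx⟩ := hcover x
    obtain ⟨m, hm⟩ := exists_nat_one_div_lt hx
    refine ⟨F U m, mem_iUnion.2 ⟨Nat.pair n m, U, by simpa using hU, by simp⟩, ?_⟩
    rw [one_div] at hm
    exact hm.le

theorem hasSigmaDiscreteClosedRefinement_of_existsUSmallPU {u : ℕ → Set (Set X)}
    (hd : ∀ n, DiscreteSetFam (u n)) (h : ExistsUSmallPU (⋃ n, u n)) :
    HasSigmaDiscreteClosedRefinement (⋃ n, u n) := by
  obtain ⟨S, f, ⟨hf, hf_pu⟩, hsmall⟩ := h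
  choose U hU hUf using hsmall
  refine hasSigmaDiscreteClosedRefinement_of_continuous hd
    (q := fun W x ↦ coordSup {s | U s = W} (f x))
    (fun W ↦ (lipschitzWith_coordSup _).continuous.comp hf) (fun W x hx ↦ ?_) fun x ↦ ?_
  · obtain ⟨s, rfl, hs⟩ := exists_pos_of_coordSup_pos hx
    exact hUf s hs.ne'
  · obtain ⟨s, hs⟩ : ∃ s, 0 < f x s := by
      by_contra! hle
      exact absurd (hasSum_le hle (hf_pu x).2 hasSum_zero) (by norm_num)
    obtain ⟨n, hn⟩ := mem_iUnion.1 (hU s)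
    exact ⟨n, U s, hn, hs.trans_le (le_coordSup (T := {s' | U s' = U s}) rfl _)⟩

end FromPartitionOfUnity

/-- A σ-discrete open cover of a normal space admits a small partition of unity iff it has
a σ-discrete closed refinement. -/
theorem stmt9 (X : Type) [TopologicalSpace X] [NormalSpace X]
    (u : ℕ → Set (Set X)) (hd : ∀ n, DiscreteSetFam (u n))
    (𝒰 : Set (Set X)) (h𝒰 : 𝒰 = ⋃ n, u n) (hcov : IsOpenCover 𝒰) :
    ExistsUSmallPU 𝒰 ↔ HasSigmaDiscreteClosedRefinement 𝒰 := by
  subst h𝒰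
  refine ⟨hasSigmaDiscreteClosedRefinement_of_existsUSmallPU hd, fun h ↦ ?_⟩
  obtain ⟨G, hG_closed, hG_sub, hG_cover⟩ := h.exists_isClosed_subset
  exact existsUSmallPU_of_isClosed_subset hd
    (fun n U hU ↦ hcov.1 U (mem_iUnion.2 ⟨n, hU⟩)) hG_closed hG_sub hG_cover
end
end

section
/- Let X be a collectionwise normal space and 𝒰 an open cover of X. Then 𝒰 admits a 𝒰-small partition of unity if and only if 𝒰 has a σ-discrete closed refinement. -/
noncomputable section
open Set Topology TopologicalSpace

/-!
A partition of unity `f : X → ℓ¹(S)` pulls back the open cover `{a | a s ≠ 0}` of the metric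
space `ℓ¹(S)`. By Stone's argument (well-order `S`; around the points whose first index is `s`
and whose `3r`-ball lies in the `s`-th member, take closed `r/2`-thickenings, `r = 1/(n+1)`),
that cover has a σ-discrete closed refinement, and preimages under `f` stay closed and discrete.

Conversely, collectionwise normality expands each discrete closed family `D n` to a discrete
open family, inside which Urysohn functions are chosen. Summing them with weights `2⁻ⁿ` and
normalising gives a partition of unity; it is continuous into `ℓ¹` because coordinatewise
convergence of probability vectors is already `ℓ¹`-convergence.
-/

theorem tsum_le_of_subsingleton_support {S : Type} {g : S → ℝ} {c : ℝ}
    (hg : (Function.support g).Subsingleton) (hc : 0 ≤ c) (hgc : ∀ s, g s ≤ c) :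
    ∑' s, g s ≤ c := by
  obtain h | ⟨s, hs⟩ := hg.eq_empty_or_singleton
  · simpa [Function.support_eq_empty_iff.1 h] using hc
  · rw [tsum_eq_single s fun t ht => Function.notMem_support.1 fun h => ht (by simpa [hs] using h)]
    exact hgc s

namespace DiscreteFam

variable {X S : Type} [TopologicalSpace X]

theorem mono {A B : S → Set X} (hA : DiscreteFam A) (hBA : ∀ s, B s ⊆ A s) :
    DiscreteFam B := by
  intro x
  obtain ⟨N, hN, hsub⟩ := hA x
  exact ⟨N, hN, hsub.anti fun s ⟨y, hyB, hyN⟩ => ⟨y, hBA s hyB, hyN⟩⟩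

theorem preimage {Y : Type} [TopologicalSpace Y] {A : S → Set Y} (hA : DiscreteFam A)
    {f : X → Y} (hf : Continuous f) : DiscreteFam fun s => f ⁻¹' A s := by
  intro x
  obtain ⟨N, hN, hsub⟩ := hA (f x)
  exact ⟨f ⁻¹' N, hf.continuousAt hN, hsub.anti fun s ⟨y, hyA, hyN⟩ => ⟨f y, hyA, hyN⟩⟩

theorem locallyFinite {A : S → Set X} (hA : DiscreteFam A) : LocallyFinite A := by
  intro x
  obtain ⟨N, hN, hsub⟩ := hA x
  exact ⟨N, hN, hsub.finite⟩

theorem discreteSetFam_range {A : S → Set X} (hA : DiscreteFam A) :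
    DiscreteSetFam (range A) := by
  intro x
  obtain ⟨N, hN, hsub⟩ := hA x
  refine ⟨N, hN, ?_⟩
  rintro _ ⟨⟨s, rfl⟩, hs⟩ _ ⟨⟨t, rfl⟩, ht⟩
  rw [hsub hs ht]

theorem subsingleton_setOf_mem {A : S → Set X} (hA : DiscreteFam A) (x : X) :
    {s | x ∈ A s}.Subsingleton := by
  obtain ⟨N, hN, hsub⟩ := hA x
  exact hsub.anti fun s hs => ⟨x, hs, mem_of_mem_nhds hN⟩

theorem subsingleton_support_apply {g : S → X → ℝ}
    (hg : DiscreteFam fun s => Function.support (g s)) (x : X) :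
    (Function.support fun s => g s x).Subsingleton :=
  hg.subsingleton_setOf_mem x

theorem hasSum_tsum_apply {g : S → X → ℝ} (hg : DiscreteFam fun s => Function.support (g s))
    (x : X) : HasSum (fun s => g s x) (∑' s, g s x) :=
  (summable_of_hasFiniteSupport (hg.subsingleton_support_apply x).finite).hasSum

theorem continuous_tsum {g : S → X → ℝ} (hg : DiscreteFam fun s => Function.support (g s))
    (hgc : ∀ s, Continuous (g s)) : Continuous fun x => ∑' s, g s x := by
  simp_rw [tsum_eq_finsum (hg.subsingleton_support_apply _).finite]
  exact continuous_finsum hgc hg.locallyFinite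

end DiscreteFam

theorem DiscreteSetFam.discreteFam_subtype {X : Type} [TopologicalSpace X] {𝒜 : Set (Set X)}
    (h𝒜 : DiscreteSetFam 𝒜) : DiscreteFam fun A : 𝒜 => (A : Set X) := by
  intro x
  obtain ⟨N, hN, hsub⟩ := h𝒜 x
  exact ⟨N, hN, fun A hA B hB => Subtype.ext (hsub ⟨A.2, hA⟩ ⟨B.2, hB⟩)⟩

namespace CwNormal

variable {X : Type} [TopologicalSpace X]

theorem normalSpace (hX : CwNormal X) : NormalSpace X := by
  refine ⟨fun s t hs ht hst => ?_⟩
  let A : Bool → Set X := fun b => cond b s t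
  have hAd : DiscreteFam A := by
    intro x
    by_cases hx : x ∈ s
    · refine ⟨tᶜ, ht.isOpen_compl.mem_nhds (hst.notMem_of_mem_left hx),
        (Set.subsingleton_singleton (a := true)).anti ?_⟩
      rintro (_ | _) ⟨y, hyA, hyN⟩
      · exact absurd hyA hyN
      · rfl
    · refine ⟨sᶜ, hs.isOpen_compl.mem_nhds hx, (Set.subsingleton_singleton (a := false)).anti ?_⟩
      rintro (_ | _) ⟨y, hyA, hyN⟩
      · rfl
      · exact absurd hyA hyN
  obtain ⟨V, hVo, hAV, hVd⟩ := hX Bool A (fun b => by cases b <;> assumption) hAd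
  refine ⟨V true, V false, hVo true, hVo false, hAV true, hAV false,
    Set.disjoint_left.2 fun x hxt hxf => ?_⟩
  obtain ⟨N, hN, hsub⟩ := hVd x
  exact Bool.noConfusion (hsub ⟨x, hxt, mem_of_mem_nhds hN⟩ ⟨x, hxf, mem_of_mem_nhds hN⟩)

theorem exists_discreteFam_urysohn (hX : CwNormal X) {S : Type} {A O : S → Set X}
    (hA : ∀ s, IsClosed (A s)) (hAd : DiscreteFam A) (hO : ∀ s, IsOpen (O s))
    (hAO : ∀ s, A s ⊆ O s) :
    ∃ g : S → C(X, ℝ), (∀ s x, g s x ∈ Icc (0 : ℝ) 1) ∧ (∀ s, EqOn (g s) 1 (A s)) ∧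
      (∀ s, Function.support (g s) ⊆ O s) ∧ DiscreteFam fun s => Function.support (g s) := by
  have := hX.normalSpace
  obtain ⟨V, hVo, hAV, hVd⟩ := hX S A hA hAd
  have hg : ∀ s, ∃ g : C(X, ℝ), EqOn g 0 (V s ∩ O s)ᶜ ∧ EqOn g 1 (A s) ∧
      ∀ x, g x ∈ Icc (0 : ℝ) 1 :=
    fun s => exists_continuous_zero_one_of_isClosed ((hVo s).inter (hO s)).isClosed_compl (hA s)
      (Set.disjoint_compl_left_iff_subset.2 (subset_inter (hAV s) (hAO s)))
  choose g hg0 hg1 hg01 using hg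
  have hsupp : ∀ s, Function.support (g s) ⊆ V s ∩ O s := fun s x hx =>
    not_not.1 fun h => hx (hg0 s h)
  exact ⟨g, fun s => hg01 s, hg1, fun s => (hsupp s).trans inter_subset_right,
    hVd.mono fun s => (hsupp s).trans inter_subset_left⟩

end CwNormal

namespace lp

variable {S : Type}

theorem dist_eq_tsum_abs_sub (a b : lp (fun _ : S => ℝ) 1) :
    dist a b = ∑' s, |a s - b s| := by
  rw [dist_eq_norm]
  simpa using lp.norm_eq_tsum_rpow (p := 1) (by norm_num) (a - b)

/-- For probability vectors, `|a - b| = a + b - 2 min a b` turns the `ℓ¹` distance into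
`2 - 2 ∑ min a b`, which a finite set `T` carrying most of the mass of `a` controls. -/
theorem dist_le_of_hasSum_one {a b : lp (fun _ : S => ℝ) 1} (ha₀ : ∀ s, 0 ≤ a s)
    (hb₀ : ∀ s, 0 ≤ b s) (ha : HasSum (fun s => a s) 1) (hb : HasSum (fun s => b s) 1)
    (T : Finset S) :
    dist a b ≤ 2 * ∑ s ∈ T, |a s - b s| + 2 * (1 - ∑ s ∈ T, a s) := by
  have hmin : Summable fun s => min (a s) (b s) :=
    Summable.of_nonneg_of_le (fun s => le_min (ha₀ s) (hb₀ s)) (fun s => min_le_left _ _)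
      ha.summable
  have hdist : HasSum (fun s => |a s - b s|) (1 + 1 - 2 * ∑' s, min (a s) (b s)) := by
    have habs : ∀ s, |a s - b s| = a s + b s - 2 * min (a s) (b s) := fun s => by
      linarith [min_add_max (a s) (b s), max_sub_min_eq_abs' (a s) (b s)]
    simp_rw [habs]
    exact (ha.add hb).sub (hmin.hasSum.mul_left 2)
  have hT : ∑ s ∈ T, min (a s) (b s) ≤ ∑' s, min (a s) (b s) :=
    hmin.sum_le_tsum T fun s _ => le_min (ha₀ s) (hb₀ s)
  have hTmin : ∑ s ∈ T, (a s - |a s - b s|) ≤ ∑ s ∈ T, min (a s) (b s) :=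
    Finset.sum_le_sum fun s _ =>
      le_min (sub_le_self _ (abs_nonneg _)) (by linarith [le_abs_self (a s - b s)])
  rw [Finset.sum_sub_distrib] at hTmin
  rw [dist_eq_tsum_abs_sub, hdist.tsum_eq]
  linarith

end lp

theorem continuous_lp_one_of_hasSum_one {X S : Type} [TopologicalSpace X]
    {F : X → lp (fun _ : S => ℝ) 1} (hcont : ∀ s, Continuous fun x => F x s)
    (h₀ : ∀ x s, 0 ≤ F x s) (h₁ : ∀ x, HasSum (fun s => F x s) 1) : Continuous F := by
  refine continuous_iff_continuousAt.2 fun x => Metric.tendsto_nhds.2 fun ε hε => ?_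
  obtain ⟨T, hT⟩ : ∃ T : Finset S, 1 - ε / 4 < ∑ s ∈ T, F x s :=
    ((h₁ x).eventually (eventually_gt_nhds (by linarith))).exists
  have hnear : ∀ᶠ y in 𝓝 x, ∑ s ∈ T, |F x s - F y s| < ε / 4 := by
    have hc : Continuous fun y => ∑ s ∈ T, |F x s - F y s| := by fun_prop
    exact hc.continuousAt.eventually_lt_const (by simpa using div_pos hε four_pos)
  filter_upwards [hnear] with y hy
  rw [dist_comm]
  linarith [lp.dist_le_of_hasSum_one (h₀ x) (h₀ y) (h₁ x) (h₁ y) T]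

theorem exists_isPU_of_hasSum {X S : Type} [TopologicalSpace X] {w : S → X → ℝ} {H : X → ℝ}
    (hw : ∀ s, Continuous (w s)) (hw₀ : ∀ s x, 0 ≤ w s x) (hH : Continuous H)
    (hH₀ : ∀ x, 0 < H x) (hwH : ∀ x, HasSum (fun s => w s x) (H x)) :
    ∃ f : X → lp (fun _ : S => ℝ) 1, IsPU f ∧ ∀ x s, f x s = w s x / H x := by
  have hsum : ∀ x, HasSum (fun s => w s x / H x) 1 := fun x => by
    simpa [div_self (hH₀ x).ne'] using (hwH x).div_const (H x)
  have hmem : ∀ x, Memℓp (fun s => w s x / H x) 1 := fun x =>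
    memℓp_gen (by simpa only [ENNReal.toReal_one, Real.rpow_one, Real.norm_eq_abs] using
      (hsum x).summable.abs)
  let f : X → lp (fun _ : S => ℝ) 1 := fun x => ⟨_, hmem x⟩
  have hf₀ : ∀ x s, 0 ≤ f x s := fun x s => div_nonneg (hw₀ s x) (hH₀ x).le
  refine ⟨f, ⟨?_, fun x => ⟨hf₀ x, hsum x⟩⟩, fun _ _ => rfl⟩
  exact continuous_lp_one_of_hasSum_one (fun s => ((hw s).div hH fun x => (hH₀ x).ne')) hf₀ hsum

theorem exists_isPU_of_sigma_discreteFam {X : Type} [TopologicalSpace X] {T : ℕ → Type}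
    (g : (n : ℕ) → T n → C(X, ℝ)) (hg : ∀ n t x, g n t x ∈ Icc (0 : ℝ) 1)
    (hd : ∀ n, DiscreteFam fun t => Function.support (g n t))
    (hcov : ∀ x, ∃ n t, g n t x ≠ 0) :
    ∃ f : X → lp (fun _ : (Σ n, T n) => ℝ) 1,
      IsPU f ∧ ∀ i, {x | f x i ≠ 0} ⊆ Function.support (g i.1 i.2) := by
  set w : (Σ n, T n) → X → ℝ := fun i x => (1 / 2 : ℝ) ^ i.1 * g i.1 i.2 x
  set σ : ℕ → X → ℝ := fun n x => ∑' t, g n t x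
  set H : X → ℝ := fun x => ∑' n, (1 / 2 : ℝ) ^ n * σ n x
  have hw₀ : ∀ i x, 0 ≤ w i x := fun i x => mul_nonneg (by positivity) (hg i.1 i.2 x).1
  have hσ₀ : ∀ n x, 0 ≤ σ n x := fun n x => tsum_nonneg fun t => (hg n t x).1
  have hσ₁ : ∀ n x, σ n x ≤ 1 := fun n x =>
    tsum_le_of_subsingleton_support ((hd n).subsingleton_support_apply x) zero_le_one
      fun t => (hg n t x).2
  have hH : Continuous H := by
    refine continuous_tsum (fun n => continuous_const.mul ((hd n).continuous_tsum fun t =>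
      (g n t).continuous)) summable_geometric_two fun n x => ?_
    rw [Real.norm_of_nonneg (mul_nonneg (by positivity) (hσ₀ n x))]
    exact mul_le_of_le_one_right (by positivity) (hσ₁ n x)
  have hterm : ∀ x, Summable fun n => (1 / 2 : ℝ) ^ n * σ n x := fun x =>
    summable_geometric_two.of_nonneg_of_le (fun n => mul_nonneg (by positivity) (hσ₀ n x))
      fun n => mul_le_of_le_one_right (by positivity) (hσ₁ n x)
  have hfiber : ∀ x n, HasSum (fun t => w ⟨n, t⟩ x) ((1 / 2 : ℝ) ^ n * σ n x) := fun x n =>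
    ((hd n).hasSum_tsum_apply x).mul_left _
  have hwH : ∀ x, HasSum (fun i => w i x) (H x) := fun x => by
    have hw : Summable fun i => w i x := (summable_sigma_of_nonneg fun i => hw₀ i x).2
      ⟨fun n => (hfiber x n).summable, (hterm x).congr fun n => (hfiber x n).tsum_eq.symm⟩
    convert hw.hasSum using 1
    exact (hw.hasSum.sigma (hfiber x)).tsum_eq
  have hH₀ : ∀ x, 0 < H x := fun x => by
    obtain ⟨n, t, hnt⟩ := hcov x
    rw [← (hwH x).tsum_eq]
    exact (hwH x).summable.tsum_pos (fun i => hw₀ i x) ⟨n, t⟩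
      (mul_pos (by positivity) ((hg n t x).1.lt_of_ne' hnt))
  obtain ⟨f, hf, hfw⟩ := exists_isPU_of_hasSum (w := w)
    (fun i => continuous_const.mul (g i.1 i.2).continuous) hw₀ hH hH₀ hwH
  refine ⟨f, hf, fun i x hx hgx => hx ?_⟩
  simp [hfw, w, hgx]

section StoneRefinement

open Metric

variable {M S : Type} [PseudoMetricSpace M] [LinearOrder S] (W : S → Set M)

def stoneCenters (r : ℝ) (s : S) : Set M :=
  {p | (∀ t < s, p ∉ W t) ∧ ball p (3 * r) ⊆ W s}

variable {W}

theorem le_dist_of_mem_stoneCenters {r : ℝ} {s t : S} (hst : s < t) {p q : M}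
    (hp : p ∈ stoneCenters W r s) (hq : q ∈ stoneCenters W r t) : 3 * r ≤ dist p q := by
  by_contra! h
  exact hq.1 s hst (hp.2 (mem_ball'.2 h))

theorem lt_dist_of_mem_cthickening_stoneCenters {r : ℝ} (hr : 0 < r) {s t : S} (hst : s ≠ t)
    {y z : M} (hy : y ∈ cthickening (r / 2) (stoneCenters W r s))
    (hz : z ∈ cthickening (r / 2) (stoneCenters W r t)) : r < dist y z := by
  have hsub : ∀ u, cthickening (r / 2) (stoneCenters W r u) ⊆ thickening r (stoneCenters W r u) :=
    fun u => cthickening_subset_thickening' hr (half_lt_self hr) _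
  obtain ⟨p, hp, hyp⟩ := mem_thickening_iff.1 (hsub s hy)
  obtain ⟨q, hq, hzq⟩ := mem_thickening_iff.1 (hsub t hz)
  have hpq : 3 * r ≤ dist p q := by
    rcases hst.lt_or_gt with h | h
    · exact le_dist_of_mem_stoneCenters h hp hq
    · exact dist_comm q p ▸ le_dist_of_mem_stoneCenters h hq hp
  linarith [dist_triangle4 p y z q, dist_comm p y]

theorem discreteFam_cthickening_stoneCenters {r : ℝ} (hr : 0 < r) :
    DiscreteFam fun s => cthickening (r / 2) (stoneCenters W r s) := by
  intro x
  refine ⟨ball x (r / 2), ball_mem_nhds x (half_pos hr), ?_⟩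
  rintro s ⟨y, hy, hyx⟩ t ⟨z, hz, hzx⟩
  by_contra hst
  have := lt_dist_of_mem_cthickening_stoneCenters hr hst hy hz
  linarith [dist_triangle_right y z x, mem_ball.1 hyx, mem_ball.1 hzx]

theorem cthickening_stoneCenters_subset {r : ℝ} (hr : 0 < r) (s : S) :
    cthickening (r / 2) (stoneCenters W r s) ⊆ W s := by
  intro y hy
  obtain ⟨p, hp, hyp⟩ := mem_thickening_iff.1
    (cthickening_subset_thickening' hr (half_lt_self hr) _ hy)
  exact hp.2 (mem_ball.2 (by linarith))

theorem exists_mem_stoneCenters [WellFoundedLT S] (hW : ∀ s, IsOpen (W s)) {a : M} {s₀ : S}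
    (ha : a ∈ W s₀) : ∃ n : ℕ, ∃ s, a ∈ stoneCenters W (1 / (n + 1)) s := by
  obtain ⟨s, has, hmin⟩ := wellFounded_lt.has_min {s | a ∈ W s} ⟨s₀, ha⟩
  obtain ⟨ε, hε, hball⟩ := Metric.isOpen_iff.1 (hW s) a has
  obtain ⟨n, hn⟩ := exists_nat_one_div_lt (div_pos hε three_pos)
  exact ⟨n, s, fun t hts hat => hmin t hat hts,
    (ball_subset_ball (by linarith)).trans hball⟩

theorem exists_discreteFam_closed_refinement [WellFoundedLT S] (hW : ∀ s, IsOpen (W s)) :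
    ∃ E : ℕ → S → Set M, (∀ n, DiscreteFam (E n)) ∧ (∀ n s, IsClosed (E n s)) ∧
      (∀ n s, E n s ⊆ W s) ∧ ⋃ s, W s ⊆ ⋃ n, ⋃ s, E n s := by
  have hr : ∀ n : ℕ, (0 : ℝ) < 1 / (n + 1) := fun n => Nat.one_div_pos_of_nat
  refine ⟨fun n s => cthickening (1 / (n + 1) / 2) (stoneCenters W (1 / (n + 1)) s),
    fun n => discreteFam_cthickening_stoneCenters (hr n), fun n s => isClosed_cthickening,
    fun n s => cthickening_stoneCenters_subset (hr n) s, ?_⟩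
  refine iUnion_subset fun s₀ a ha => ?_
  obtain ⟨n, s, has⟩ := exists_mem_stoneCenters hW ha
  exact mem_iUnion₂.2 ⟨n, s, self_subset_cthickening _ has⟩

end StoneRefinement

theorem IsPU.hasSigmaDiscreteClosedRefinement {X S : Type} [TopologicalSpace X]
    {𝒰 : Set (Set X)} {f : X → lp (fun _ : S => ℝ) 1} (hf : IsPU f) (hsmall : IsUSmall 𝒰 f) :
    HasSigmaDiscreteClosedRefinement 𝒰 := by
  obtain ⟨_, _⟩ := exists_wellFoundedLT S
  obtain ⟨E, hEd, hEc, hEW, hEcov⟩ := exists_discreteFam_closed_refinement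
    (W := fun s => {a : lp (fun _ : S => ℝ) 1 | a s ≠ 0})
    fun s => isOpen_ne_fun (lp.evalCLM ℝ (fun _ : S => ℝ) 1 s).continuous continuous_const
  refine ⟨fun n => range fun s => f ⁻¹' E n s,
    fun n => ((hEd n).preimage hf.1).discreteSetFam_range, ?_, ?_, ?_⟩
  · rintro n _ ⟨s, rfl⟩
    exact (hEc n s).preimage hf.1
  · rintro n _ ⟨s, rfl⟩
    obtain ⟨U, hU, hsub⟩ := hsmall s
    exact ⟨U, hU, fun x hx => hsub (hEW n s hx)⟩
  · refine eq_univ_of_forall fun x => ?_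
    obtain ⟨s, hs⟩ : ∃ s, f x s ≠ 0 := by
      by_contra! h
      have h0 : HasSum (fun s => f x s) 0 := by simp [h]
      exact one_ne_zero ((hf.2 x).2.unique h0)
    obtain ⟨n, t, hx⟩ := mem_iUnion₂.1 (hEcov (mem_iUnion.2 ⟨s, hs⟩))
    exact ⟨f ⁻¹' E n t, mem_iUnion.2 ⟨n, t, rfl⟩, hx⟩

theorem CwNormal.existsUSmallPU {X : Type} [TopologicalSpace X] (hX : CwNormal X)
    {𝒰 : Set (Set X)} (h𝒰 : ∀ U ∈ 𝒰, IsOpen U) (h : HasSigmaDiscreteClosedRefinement 𝒰) :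
    ExistsUSmallPU 𝒰 := by
  obtain ⟨D, hDd, hDc, hD𝒰, hDcov⟩ := h
  choose O hO𝒰 hFO using hD𝒰
  have hbump := fun n => hX.exists_discreteFam_urysohn (A := fun F : D n => (F : Set X))
    (O := fun F => O n F F.2) (fun F => hDc n F F.2) (hDd n).discreteFam_subtype
    (fun F => h𝒰 _ (hO𝒰 n F F.2)) (fun F => hFO n F F.2)
  choose g hg01 hg1 hgO hgd using hbump
  have hcov : ∀ x, ∃ n, ∃ F : D n, g n F x ≠ 0 := fun x => by
    obtain ⟨F, hF, hxF⟩ := hDcov ▸ mem_univ x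
    obtain ⟨n, hFn⟩ := mem_iUnion.1 hF
    exact ⟨n, ⟨F, hFn⟩, by simp [hg1 n ⟨F, hFn⟩ hxF]⟩
  obtain ⟨f, hf, hfg⟩ := exists_isPU_of_sigma_discreteFam g hg01 hgd hcov
  exact ⟨_, f, hf, fun i => ⟨O i.1 i.2 i.2.2, hO𝒰 _ _ _, (hfg i).trans (hgO i.1 i.2)⟩⟩

/-- In a collectionwise normal space, an open cover admits a small partition of unity iff
it has a σ-discrete closed refinement. -/
theorem stmt10 (X : Type) [TopologicalSpace X] (hX : CwNormal X)
    (𝒰 : Set (Set X)) (hcov : IsOpenCover 𝒰) :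
    ExistsUSmallPU 𝒰 ↔ HasSigmaDiscreteClosedRefinement 𝒰 :=
  ⟨fun ⟨_, _, hf, hsmall⟩ => hf.hasSigmaDiscreteClosedRefinement hsmall,
    hX.existsUSmallPU hcov.1⟩
end
end

section
/- Every point-finite open cover 𝒱 = {V_s}_{s∈S} of a collectionwise normal space X has a σ-discrete closed refinement. -/
noncomputable section
open Set Topology TopologicalSpace

/-- A collectionwise normal space is normal: a closed set inside an open set can be
fattened to an open set whose closure stays inside. -/
lemma cwNormal_sep {X : Type} [TopologicalSpace X] (hX : CwNormal X) {C U : Set X}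
    (hC : IsClosed C) (hU : IsOpen U) (hCU : C ⊆ U) :
    ∃ P : Set X, IsOpen P ∧ C ⊆ P ∧ closure P ⊆ U := by
  have hclosed : ∀ b : Bool, IsClosed (if b then C else Uᶜ) := by
    intro b
    cases b with
    | false => exact hU.isClosed_compl
    | true => exact hC
  have hdisc : DiscreteFam (fun b : Bool => if b then C else Uᶜ) := by
    intro x
    by_cases hx : x ∈ C
    · refine ⟨U, hU.mem_nhds (hCU hx), ?_⟩
      have h : ∀ b : Bool, ((if b then C else Uᶜ) ∩ U).Nonempty → b = true := by
        intro b hb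
        cases b with
        | true => rfl
        | false =>
          obtain ⟨y, hy1, hy2⟩ := hb
          exact absurd hy2 hy1
      intro b₁ hb₁ b₂ hb₂
      rw [h b₁ hb₁, h b₂ hb₂]
    · refine ⟨Cᶜ, hC.isOpen_compl.mem_nhds hx, ?_⟩
      have h : ∀ b : Bool, ((if b then C else Uᶜ) ∩ Cᶜ).Nonempty → b = false := by
        intro b hb
        cases b with
        | false => rfl
        | true =>
          obtain ⟨y, hy1, hy2⟩ := hb
          exact absurd hy1 hy2
      intro b₁ hb₁ b₂ hb₂
      rw [h b₁ hb₁, h b₂ hb₂]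
  obtain ⟨W, hWopen, hWsub, hWdisc⟩ := hX Bool _ hclosed hdisc
  have hdisj : W true ∩ W false = ∅ := by
    by_contra h
    obtain ⟨x, hx1, hx2⟩ := Set.nonempty_iff_ne_empty.2 h
    obtain ⟨N, hN, hsub⟩ := hWdisc x
    have : (true : Bool) = false :=
      hsub ⟨x, hx1, mem_of_mem_nhds hN⟩ ⟨x, hx2, mem_of_mem_nhds hN⟩
    simp at this
  refine ⟨W true, hWopen true, by simpa using hWsub true, ?_⟩
  have h1 : W true ⊆ (W false)ᶜ := by
    intro x hx hx'
    exact absurd (Set.mem_inter hx hx') (by simp [hdisj])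
  have h2 : closure (W true) ⊆ (W false)ᶜ :=
    closure_minimal h1 (hWopen false).isClosed_compl
  intro x hx
  by_contra hxU
  exact h2 hx (hWsub false (by simpa using hxU))

/-- Every point-finite open cover of a collectionwise normal space has a σ-discrete closed
refinement. -/
theorem stmt12 (X S : Type) [TopologicalSpace X] (hX : CwNormal X)
    (V : S → Set X) (hopen : ∀ s, IsOpen (V s)) (hcov : ⋃ s, V s = univ)
    (hpf : ∀ x : X, {s : S | x ∈ V s}.Finite) :
    HasSigmaDiscreteClosedRefinement (Set.range V) := by

  classical
  -- the finite set of indices whose member contains `x`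
  set Tf : X → Finset S := fun x => (hpf x).toFinset with hTf
  have hmemTf : ∀ x s, s ∈ Tf x ↔ x ∈ V s := by
    intro x s; simp [hTf, Set.Finite.mem_toFinset]
  have hTfne : ∀ x : X, (Tf x).Nonempty := by
    intro x
    have : x ∈ ⋃ s, V s := by rw [hcov]; trivial
    obtain ⟨s, hs⟩ := Set.mem_iUnion.1 this
    exact ⟨s, (hmemTf x s).2 hs⟩
  -- the closed sets E n of points in at most n members of the cover
  set E : ℕ → Set X := fun n => {x | (Tf x).card ≤ n} with hE
  have hEcompl : ∀ n : ℕ, (E n)ᶜ = ⋃ (F : Finset S), ⋃ (_ : F.card = n + 1), ⋂ s ∈ F, V s := by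
    intro n
    ext x
    simp only [hE, Set.mem_compl_iff, Set.mem_setOf_eq, not_le, Set.mem_iUnion,
      Set.mem_iInter]
    constructor
    · intro h
      obtain ⟨F, hFsub, hFcard⟩ := Finset.exists_subset_card_eq h
      exact ⟨F, hFcard, fun s hs => (hmemTf x s).1 (hFsub hs)⟩
    · rintro ⟨F, hFcard, hF⟩
      have : F ⊆ Tf x := fun s hs => (hmemTf x s).2 (hF s hs)
      calc n < n + 1 := Nat.lt_succ_self n
        _ = F.card := hFcard.symm
        _ ≤ (Tf x).card := Finset.card_le_card this
  have hEclosed : ∀ n, IsClosed (E n) := by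
    intro n
    rw [← isOpen_compl_iff, hEcompl]
    exact isOpen_iUnion fun F => isOpen_iUnion fun _ =>
      isOpen_biInter_finset fun s _ => hopen s
  have hmemEnot : ∀ {n : ℕ} {x : X}, x ∉ E n → n + 1 ≤ (Tf x).card := by
    intro n x hx
    simpa [hE] using hx
  -- the basic neighborhood of a point
  have hNx : ∀ x : X, (⋂ s ∈ Tf x, V s) ∈ nhds x := by
    intro x
    refine (isOpen_biInter_finset fun s _ => hopen s).mem_nhds ?_
    exact Set.mem_iInter₂.2 fun s hs => (hmemTf x s).1 hs
  -- the key inductive step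
  have key : ∀ (n : ℕ) (G : Set X), IsOpen G → E n ⊆ G →
      ∃ (𝒟 : Set (Set X)) (G' : Set X), IsOpen G' ∧ E (n + 1) ⊆ G' ∧
        G' ⊆ G ∪ ⋃₀ 𝒟 ∧ DiscreteSetFam 𝒟 ∧ (∀ A ∈ 𝒟, IsClosed A) ∧
        (∀ A ∈ 𝒟, ∃ U ∈ Set.range V, A ⊆ U) := by
    intro n G hGopen hEG
    set ι := {F : Finset S // F.card = n + 1} with hι
    set B : ι → Set X := fun F => {x | ∀ s, x ∈ V s → s ∈ F.1} with hB
    have hBclosed : ∀ F : ι, IsClosed (B F) := by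
      intro F
      rw [← isOpen_compl_iff]
      have : (B F)ᶜ = ⋃ (s : S), ⋃ (_ : s ∉ F.1), V s := by
        ext x
        simp only [hB, Set.mem_compl_iff, Set.mem_setOf_eq, Set.mem_iUnion]
        push_neg
        tauto
      rw [this]
      exact isOpen_iUnion fun s => isOpen_iUnion fun _ => hopen s
    set D : ι → Set X := fun F => B F \ G with hD
    have hDclosed : ∀ F : ι, IsClosed (D F) :=
      fun F => (hBclosed F).sdiff hGopen
    -- points of D F lie in exactly the members indexed by F
    have hDTf : ∀ (F : ι) (y : X), y ∈ D F → Tf y = F.1 := by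
      intro F y hy
      have h1 : Tf y ⊆ F.1 := fun s hs => hy.1 s ((hmemTf y s).1 hs)
      have h2 : y ∉ E n := fun h => hy.2 (hEG h)
      refine Finset.eq_of_subset_of_card_le h1 ?_
      rw [F.2]
      exact hmemEnot h2
    have hDsubV : ∀ (F : ι), D F ⊆ ⋂ s ∈ F.1, V s := by
      intro F y hy
      refine Set.mem_iInter₂.2 fun s hs => ?_
      exact (hmemTf y s).1 (by rw [hDTf F y hy]; exact hs)
    -- D is a discrete family
    have hDdisc : DiscreteFam D := by
      intro x
      by_cases hx : x ∈ G
      · refine ⟨G, hGopen.mem_nhds hx, ?_⟩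
        intro F₁ hF₁ F₂ hF₂
        exfalso
        obtain ⟨y, hy1, hy2⟩ := hF₁
        exact hy1.2 hy2
      · refine ⟨⋂ s ∈ Tf x, V s, hNx x, ?_⟩
        have hcard : n + 1 ≤ (Tf x).card := hmemEnot (fun h => hx (hEG h))
        have haux : ∀ F : ι, (D F ∩ ⋂ s ∈ Tf x, V s).Nonempty → F.1 = Tf x := by
          rintro F ⟨y, hy1, hy2⟩
          have h1 : Tf x ⊆ Tf y := by
            intro s hs
            exact (hmemTf y s).2 (Set.mem_iInter₂.1 hy2 s hs)
          rw [hDTf F y hy1] at h1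
          exact (Finset.eq_of_subset_of_card_le h1 (by rw [F.2]; exact hcard)).symm
        intro F₁ hF₁ F₂ hF₂
        exact Subtype.ext ((haux F₁ hF₁).trans (haux F₂ hF₂).symm)
    -- expand by collectionwise normality
    obtain ⟨O, hOopen, hDO, hOdisc⟩ := hX ι D hDclosed hDdisc
    set O' : ι → Set X := fun F => O F ∩ ⋂ s ∈ F.1, V s with hO'
    have hO'open : ∀ F, IsOpen (O' F) :=
      fun F => (hOopen F).inter (isOpen_biInter_finset fun s _ => hopen s)
    have hDO' : ∀ F, D F ⊆ O' F :=
      fun F => Set.subset_inter (hDO F) (hDsubV F)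
    -- shrink using normality
    choose P hPopen hDP hPcl using fun F : ι =>
      cwNormal_sep hX (hDclosed F) (hO'open F) (hDO' F)
    refine ⟨Set.range (fun F : ι => closure (P F)), G ∪ ⋃ F : ι, P F,
      hGopen.union (isOpen_iUnion hPopen), ?_, ?_, ?_, ?_, ?_⟩
    · -- E (n+1) ⊆ G'
      intro x hx
      by_cases hxG : x ∈ G
      · exact Or.inl hxG
      · have hcard : n + 1 ≤ (Tf x).card := hmemEnot (fun h => hxG (hEG h))
        have hcard' : (Tf x).card = n + 1 := le_antisymm hx hcard
        refine Or.inr (Set.mem_iUnion.2 ⟨⟨Tf x, hcard'⟩, ?_⟩)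
        refine hDP _ ⟨?_, hxG⟩
        intro s hs
        exact (hmemTf x s).2 hs
    · -- G' ⊆ G ∪ ⋃₀ 𝒟
      rintro x (hx | hx)
      · exact Or.inl hx
      · obtain ⟨F, hF⟩ := Set.mem_iUnion.1 hx
        exact Or.inr ⟨closure (P F), ⟨F, rfl⟩, subset_closure hF⟩
    · -- discreteness
      intro x
      obtain ⟨N, hN, hsub⟩ := hOdisc x
      refine ⟨N, hN, ?_⟩
      rintro A₁ ⟨⟨F₁, rfl⟩, hA₁⟩ A₂ ⟨⟨F₂, rfl⟩, hA₂⟩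
      have haux : ∀ F : ι, (closure (P F) ∩ N).Nonempty → (O F ∩ N).Nonempty := by
        rintro F ⟨y, hy1, hy2⟩
        exact ⟨y, ((hPcl F).trans Set.inter_subset_left) hy1, hy2⟩
      rw [hsub (haux F₁ hA₁) (haux F₂ hA₂)]
    · -- closedness
      rintro A ⟨F, rfl⟩
      exact isClosed_closure
    · -- refinement
      rintro A ⟨F, rfl⟩
      obtain ⟨s₀, hs₀⟩ := Finset.card_pos.1 (by rw [F.2]; exact Nat.succ_pos n)
      refine ⟨V s₀, Set.mem_range_self s₀, ?_⟩
      intro y hy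
      exact Set.mem_iInter₂.1 ((hPcl F hy).2) s₀ hs₀
  -- iterate the key step
  have main : ∀ n : ℕ, ∃ D : ℕ → Set (Set X),
      (∀ k, DiscreteSetFam (D k)) ∧ (∀ k, ∀ A ∈ D k, IsClosed A) ∧
      (∀ k, ∀ A ∈ D k, ∃ U ∈ Set.range V, A ⊆ U) ∧
      ∃ G : Set X, IsOpen G ∧ E n ⊆ G ∧ G ⊆ ⋃₀ (⋃ k, D k) := by
    intro n
    induction n with
    | zero =>
      refine ⟨fun _ => (∅ : Set (Set X)), ?_, ?_, ?_, ∅, isOpen_empty, ?_, ?_⟩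
      · intro k x
        exact ⟨Set.univ, Filter.univ_mem, fun A hA => absurd hA.1 (Set.notMem_empty A)⟩
      · intro k A hA; exact absurd hA (Set.notMem_empty A)
      · intro k A hA; exact absurd hA (Set.notMem_empty A)
      · intro x hx
        have : (Tf x).card ≤ 0 := hx
        obtain ⟨s, hs⟩ := hTfne x
        rw [Finset.card_eq_zero.1 (Nat.le_zero.1 this)] at hs
        exact absurd hs (Finset.notMem_empty s)
      · exact Set.empty_subset _
    | succ n ih =>
      obtain ⟨D, hdisc, hcl, href, G, hGopen, hEG, hGsub⟩ := ih
      obtain ⟨𝒟, G', hG'open, hEG', hG'sub, h𝒟disc, h𝒟cl, h𝒟ref⟩ := key n G hGopen hEG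
      refine ⟨fun k => Nat.casesOn k 𝒟 (fun m => D m), ?_, ?_, ?_, G', hG'open, hEG', ?_⟩
      · intro k; cases k with
        | zero => exact h𝒟disc
        | succ m => exact hdisc m
      · intro k; cases k with
        | zero => exact h𝒟cl
        | succ m => exact hcl m
      · intro k; cases k with
        | zero => exact h𝒟ref
        | succ m => exact href m
      · intro x hx
        rcases hG'sub hx with hx' | hx'
        · obtain ⟨A, hA1, hA2⟩ := hGsub hx'
          obtain ⟨k, hk⟩ := Set.mem_iUnion.1 hA1
          exact ⟨A, Set.mem_iUnion.2 ⟨k + 1, hk⟩, hA2⟩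
        · obtain ⟨A, hA1, hA2⟩ := hx'
          exact ⟨A, Set.mem_iUnion.2 ⟨0, hA1⟩, hA2⟩
  choose Dfam hdisc hcl href Gfam hGopen hEG hGsub using main
  refine ⟨fun m => Dfam m.unpair.1 m.unpair.2, ?_, ?_, ?_, ?_⟩
  · intro m; exact hdisc _ _
  · intro m; exact hcl _ _
  · intro m; exact href _ _
  · apply Set.eq_univ_of_forall
    intro x
    have hx : x ∈ E (Tf x).card := by simp [hE]
    obtain ⟨A, hA1, hA2⟩ := hGsub (Tf x).card (hEG (Tf x).card hx)
    obtain ⟨k, hk⟩ := Set.mem_iUnion.1 hA1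
    refine ⟨A, Set.mem_iUnion.2 ⟨Nat.pair (Tf x).card k, ?_⟩, hA2⟩
    rw [Nat.unpair_pair]
    exact hk
end
end

section
/- Suppose 𝒱 = {V_s}_{s∈S} (S well-ordered) is an open cover of X and {𝒰_n}_{n≥1} is a sequence of open covers of X such that for each x ∈ V_s there exists n with st(x,𝒰_n) ⊆ V_s. Then the union over n of the discretizations D(𝒱,𝒰_n) covers X. -/
noncomputable section
open Set Topology TopologicalSpace Classical

/-- `alph V U` is the least `s` with `U ⊆ V s`, or `⊤` if there is none. -/

def alph {X S : Type} [LinearOrder S] [WellFoundedLT S] (V : S → Set X)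
    (U : Set X) : WithTop S :=
  if h : {s : S | U ⊆ V s}.Nonempty then
    ↑((IsWellFounded.wf (r := ((· < ·) : S → S → Prop))).min {s : S | U ⊆ V s} h)
  else ⊤

/-- The discretization of `V` with respect to `𝒰`:
`D s = X \ ⋃ {U ∈ 𝒰 : α(U) ≠ s}`. -/
def Dset {X S : Type} [LinearOrder S] [WellFoundedLT S] (𝒰 : Set (Set X))
    (V : S → Set X) (s : S) : Set X :=
  univ \ ⋃₀ {U | U ∈ 𝒰 ∧ alph V U ≠ ↑s}

theorem alph_eq_coe {X S : Type} [LinearOrder S] [WellFoundedLT S] {V : S → Set X}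
    {U : Set X} {s : S} (hs : U ⊆ V s) (hmin : ∀ t < s, ¬U ⊆ V t) : alph V U = s := by
  have hne : {t : S | U ⊆ V t}.Nonempty := ⟨s, hs⟩
  rw [alph, dif_pos hne, WithTop.coe_inj]
  exact le_antisymm (WellFounded.min_le _ hs)
    (not_lt.mp fun h => hmin _ h (WellFounded.min_mem _ _ hne))

-- Every `U ∈ 𝒰` containing `x` lies in `V s` but in no earlier `V t`, so `α(U) = s`.
theorem mem_Dset_of_ptStar_subset {X S : Type} [LinearOrder S] [WellFoundedLT S]
    {𝒰 : Set (Set X)} {V : S → Set X} {x : X} {s : S} (hstar : ptStar x 𝒰 ⊆ V s)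
    (hmin : ∀ t < s, x ∉ V t) : x ∈ Dset 𝒰 V s := by
  refine ⟨mem_univ x, ?_⟩
  rintro ⟨U, ⟨hU, hαU⟩, hxU⟩
  exact hαU <| alph_eq_coe (fun y hy => hstar ⟨U, ⟨hU, hxU⟩, hy⟩)
    fun t ht hUt => hmin t ht (hUt hxU)

theorem stmt15_general (X S : Type) [LinearOrder S] [WellFoundedLT S]
    (V : S → Set X) (hVcov : ⋃ s, V s = univ)
    (u : ℕ → Set (Set X))
    (hstar : ∀ (x : X) (s : S), x ∈ V s → ∃ n, ptStar x (u n) ⊆ V s) :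
    ∀ x : X, ∃ (n : ℕ) (s : S), x ∈ Dset (u n) V s := by
  intro x
  have hx : {s | x ∈ V s}.Nonempty := mem_iUnion.mp (hVcov ▸ mem_univ x)
  obtain ⟨s, hxs, hmin⟩ := wellFounded_lt.has_min _ hx
  obtain ⟨n, hn⟩ := hstar x s hxs
  exact ⟨n, s, mem_Dset_of_ptStar_subset hn fun t ht hxt => hmin t hxt ht⟩

/-- If for every `x ∈ V s` some cover `𝒰_n` has `st(x,𝒰_n) ⊆ V s`, then the union of the
discretizations `D(𝒱,𝒰_n)` covers `X`. -/
theorem stmt15 (X S : Type) [TopologicalSpace X] [LinearOrder S] [WellFoundedLT S]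
    (V : S → Set X) (hVopen : ∀ s, IsOpen (V s)) (hVcov : ⋃ s, V s = univ)
    (u : ℕ → Set (Set X)) (hu : ∀ n, IsOpenCover (u n))
    (hstar : ∀ (x : X) (s : S), x ∈ V s → ∃ n, ptStar x (u n) ⊆ V s) :
    ∀ x : X, ∃ (n : ℕ) (s : S), x ∈ Dset (u n) V s :=
  stmt15_general X S V hVcov u hstar
end
end

section
/- If an open cover 𝒰 of a topological space X admits a 𝒰-small partition of unity, then 𝒰 has a σ-discrete closed refinement. -/
noncomputable section
open Set Topology TopologicalSpace

/-! Order the index set `S` well. Each `x` has a least index `s` with `f x s > 0`; at the level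
`n` with `1/(n+1) ≤ f x s`, the point `x` lies in the closed set `levelSet f n s` of points whose
`s`-coordinate is at least `1/(n+1)` while all earlier coordinates are at most `1/(n+2)`. Two
points of `levelSet f n s` and `levelSet f n t` with `s < t` differ by at least
`1/(n+1) - 1/(n+2)` in the `s`-coordinate, so for fixed `n` these sets form a discrete family,
since coordinates are `1`-Lipschitz on `lp`. -/

theorem DiscreteFam.discreteSetFam_range_s16 {X S : Type} [TopologicalSpace X] {A : S → Set X}
    (hA : DiscreteFam A) : DiscreteSetFam (range A) := by
  intro x
  obtain ⟨N, hN, hsub⟩ := hA x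
  refine ⟨N, hN, ?_⟩
  rintro _ ⟨⟨s, rfl⟩, hs⟩ _ ⟨⟨t, rfl⟩, ht⟩
  rw [hsub hs ht]

theorem exists_pos_of_nonneg_of_hasSum {S : Type} {g : S → ℝ} {a : ℝ} (hg : ∀ s, 0 ≤ g s)
    (h : HasSum g a) (ha : 0 < a) : ∃ s, 0 < g s := by
  by_contra! hle
  have hzero : g = 0 := funext fun s => le_antisymm (hle s) (hg s)
  rw [hzero] at h
  exact ha.ne' (h.unique hasSum_zero)

theorem one_div_succ_sub_one_div_succ_succ_pos (n : ℕ) :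
    0 < 1 / (n + 1 : ℝ) - 1 / (n + 2 : ℝ) := by
  have : 1 / (n + 2 : ℝ) < 1 / (n + 1) := one_div_lt_one_div_of_lt (by positivity) (by linarith)
  linarith

section LevelSet

variable {X S : Type} [LinearOrder S] {p : ENNReal}

def levelSet (f : X → lp (fun _ : S => ℝ) p) (n : ℕ) (s : S) : Set X :=
  {x | 1 / (n + 1 : ℝ) ≤ f x s ∧ ∀ t < s, f x t ≤ 1 / (n + 2 : ℝ)}

theorem levelSet_subset_support (f : X → lp (fun _ : S => ℝ) p) (n : ℕ) (s : S) :
    levelSet f n s ⊆ {x | f x s ≠ 0} := fun x hx h0 => by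
  have : (0 : ℝ) < 1 / (n + 1 : ℝ) := by positivity
  linarith [hx.1]

theorem exists_mem_levelSet [WellFoundedLT S] {f : X → lp (fun _ : S => ℝ) p} {x : X}
    (hnonneg : ∀ s, 0 ≤ f x s) (hsum : HasSum (fun s => f x s) 1) :
    ∃ n s, x ∈ levelSet f n s := by
  obtain ⟨s, hs, hmin⟩ := wellFounded_lt.has_min {s | 0 < f x s}
    (exists_pos_of_nonneg_of_hasSum hnonneg hsum one_pos)
  obtain ⟨n, hn⟩ := exists_nat_one_div_lt (show 0 < f x s from hs)
  refine ⟨n, s, hn.le, fun t hts => ?_⟩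
  have : f x t = 0 := le_antisymm (not_lt.mp fun ht => hmin t ht hts) (hnonneg t)
  rw [this]
  positivity

variable [Fact (1 ≤ p)] {f : X → lp (fun _ : S => ℝ) p}

theorem eq_of_mem_levelSet_of_dist_lt {n : ℕ} {s t : S} {y z : X} (hy : y ∈ levelSet f n s)
    (hz : z ∈ levelSet f n t) (hyz : dist (f y) (f z) < 1 / (n + 1 : ℝ) - 1 / (n + 2 : ℝ)) :
    s = t := by
  have hcoord (u : S) : dist (f y u) (f z u) < 1 / (n + 1 : ℝ) - 1 / (n + 2 : ℝ) :=
    ((lp.lipschitzWith_one_eval p u).dist_le_mul (f y) (f z)).trans_lt (by simpa using hyz)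
  rcases lt_trichotomy s t with hst | hst | hts
  · have := (abs_lt.mp (hcoord s)).2
    linarith [hy.1, hz.2 s hst]
  · exact hst
  · have := (abs_lt.mp (hcoord t)).1
    linarith [hz.1, hy.2 t hts]

variable [TopologicalSpace X]

theorem isClosed_levelSet (hf : Continuous f) (n : ℕ) (s : S) : IsClosed (levelSet f n s) := by
  have hcoord (t : S) : Continuous fun x => f x t :=
    (lp.lipschitzWith_one_eval p t).continuous.comp hf
  have heq : levelSet f n s = {x | 1 / (n + 1 : ℝ) ≤ f x s} ∩
      ⋂ t, ⋂ _ : t < s, {x | f x t ≤ 1 / (n + 2 : ℝ)} := by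
    ext x
    simp [levelSet]
  rw [heq]
  exact (isClosed_le continuous_const (hcoord s)).inter <|
    isClosed_iInter fun t => isClosed_iInter fun _ => isClosed_le (hcoord t) continuous_const

theorem discreteFam_levelSet (hf : Continuous f) (n : ℕ) : DiscreteFam (levelSet f n) := by
  intro x
  set δ := 1 / (n + 1 : ℝ) - 1 / (n + 2 : ℝ)
  have hδ : 0 < δ := one_div_succ_sub_one_div_succ_succ_pos n
  refine ⟨f ⁻¹' Metric.ball (f x) (δ / 2),
    (Metric.isOpen_ball.preimage hf).mem_nhds (Metric.mem_ball_self (half_pos hδ)), ?_⟩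
  rintro s ⟨y, hy, hyx⟩ t ⟨z, hz, hzx⟩
  refine eq_of_mem_levelSet_of_dist_lt hy hz ?_
  calc dist (f y) (f z) ≤ dist (f y) (f x) + dist (f z) (f x) := dist_triangle_right _ _ _
    _ < δ / 2 + δ / 2 := add_lt_add hyx hzx
    _ = δ := add_halves δ

end LevelSet

theorem stmt16_general (X : Type) [TopologicalSpace X] (𝒰 : Set (Set X))
    (h : ExistsUSmallPU 𝒰) :
    HasSigmaDiscreteClosedRefinement 𝒰 := by
  obtain ⟨S, f, ⟨hf, hpu⟩, hsmall⟩ := h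
  obtain ⟨_, _⟩ := exists_wellFoundedLT S
  refine ⟨fun n => range (levelSet f n),
    fun n => (discreteFam_levelSet hf n).discreteSetFam_range_s16, ?_, ?_, ?_⟩
  · rintro n _ ⟨s, rfl⟩
    exact isClosed_levelSet hf n s
  · rintro n _ ⟨s, rfl⟩
    obtain ⟨U, hU, hsub⟩ := hsmall s
    exact ⟨U, hU, (levelSet_subset_support f n s).trans hsub⟩
  · refine eq_univ_of_forall fun x => ?_
    obtain ⟨n, s, hx⟩ := exists_mem_levelSet (hpu x).1 (hpu x).2
    exact mem_sUnion.mpr ⟨levelSet f n s, mem_iUnion.mpr ⟨n, s, rfl⟩, hx⟩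

/-- If an open cover admits a `𝒰`-small partition of unity, then it has a σ-discrete
closed refinement. -/
theorem stmt16 (X : Type) [TopologicalSpace X] (𝒰 : Set (Set X))
    (hcov : IsOpenCover 𝒰) (h : ExistsUSmallPU 𝒰) :
    HasSigmaDiscreteClosedRefinement 𝒰 :=
  stmt16_general X 𝒰 h
end
end
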